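/- arXiv:1905.10001 — 5 statements merged into one kernel-verified Lean document; each statement's English description precedes it below -/
import Mathlib

section
/- Let A = {A_t}_{t∈G} and B = {B_t}_{t∈G} be C*-algebraic bundles over a finite group G with unit element e. Let C = ⊕_{t∈G} A_t, D = ⊕_{t∈G} B_t, A = A_e, B = B_e. Suppose C and D are unital and A and B contain the unit elements of C and D, respectively. If there exists an A-B-equivalence bundle X = {X_t}_{t∈G} over G such that the span of the left C-valued inner products ⟨X_t, X_s⟩_C equals A_{ts⁻¹} and the span of the right D-valued inner products ⟨X_t, X_s⟩_D equals B_{t⁻¹s} for all t, s ∈ G, then the unital inclusions of unital C*-algebras A ⊂ C and B ⊂ D are strongly Morita equivalent. -/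
noncomputable section

open scoped BigOperators

/-- The data and axioms of a Hilbert `C`-`D`-bimodule in the sense of
Brown–Mingo–Shen: a bimodule over the C*-algebras `C` and `D` carrying a
left `C`-valued and a right `D`-valued inner product, compatible with the
module actions and satisfying the associativity relation
`⟨x, y⟩_C • z = x • ⟨y, z⟩_D`. -/
structure HilbertBimod (C : Type*) (D : Type*) (Y : Type*)
    [NormedRing C] [StarRing C] [NormedRing D] [StarRing D]
    [NormedAddCommGroup Y] where
  lsmul : C → Y → Y
  rsmul : Y → D → Y
  linner : Y → Y → C
  rinner : Y → Y → D
  lsmul_add : ∀ c x y, lsmul c (x + y) = lsmul c x + lsmul c y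
  add_lsmul : ∀ c c' x, lsmul (c + c') x = lsmul c x + lsmul c' x
  mul_lsmul : ∀ c c' x, lsmul (c * c') x = lsmul c (lsmul c' x)
  one_lsmul : ∀ x, lsmul 1 x = x
  rsmul_add : ∀ x y d, rsmul (x + y) d = rsmul x d + rsmul y d
  add_rsmul : ∀ x d d', rsmul x (d + d') = rsmul x d + rsmul x d'
  rsmul_mul : ∀ x d d', rsmul x (d * d') = rsmul (rsmul x d) d'
  rsmul_one : ∀ x, rsmul x 1 = x
  lsmul_rsmul : ∀ c x d, rsmul (lsmul c x) d = lsmul c (rsmul x d)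
  linner_add_left : ∀ x y z, linner (x + y) z = linner x z + linner y z
  linner_add_right : ∀ x y z, linner x (y + z) = linner x y + linner x z
  linner_lsmul_left : ∀ c x y, linner (lsmul c x) y = c * linner x y
  linner_star : ∀ x y, star (linner x y) = linner y x
  rinner_add_left : ∀ x y z, rinner (x + y) z = rinner x z + rinner y z
  rinner_add_right : ∀ x y z, rinner x (y + z) = rinner x y + rinner x z
  rinner_rsmul_right : ∀ x y d, rinner x (rsmul y d) = rinner x y * d
  rinner_star : ∀ x y, star (rinner x y) = rinner y x
  inner_assoc : ∀ x y z, lsmul (linner x y) z = rsmul x (rinner y z)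
  norm_linner_self : ∀ x, ‖linner x x‖ = ‖x‖ ^ 2
  norm_rinner_self : ∀ x, ‖rinner x x‖ = ‖x‖ ^ 2

/-- Fullness of the left inner product: the closed linear span of the left
inner products is all of `C`. -/
def HilbertBimod.LFull {C D Y : Type*} [NormedRing C] [StarRing C] [NormedAlgebra ℂ C]
    [NormedRing D] [StarRing D] [NormedAddCommGroup Y]
    (E : HilbertBimod C D Y) : Prop :=
  (Submodule.span ℂ {c : C | ∃ x y : Y, c = E.linner x y}).topologicalClosure = ⊤

/-- Fullness of the right inner product. -/
def HilbertBimod.RFull {C D Y : Type*} [NormedRing C] [StarRing C]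
    [NormedRing D] [StarRing D] [NormedAlgebra ℂ D] [NormedAddCommGroup Y]
    (E : HilbertBimod C D Y) : Prop :=
  (Submodule.span ℂ {d : D | ∃ x y : Y, d = E.rinner x y}).topologicalClosure = ⊤

/-- A C*-algebraic bundle over a group `G`, presented through the grading it
induces on the C*-algebra `C = ⊕_{t ∈ G} A_t` of its sections:  a family of
closed subspaces `A_t ⊆ C` with `A_t A_s ⊆ A_{ts}`, `A_t* = A_{t⁻¹}`, whose
internal direct sum is all of `C`. -/
structure CStarBundle (G : Type*) [Group G] [DecidableEq G] (C : Type*)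
    [NormedRing C] [StarRing C] [NormedAlgebra ℂ C] where
  fiber : G → Submodule ℂ C
  fiber_closed : ∀ t, IsClosed (fiber t : Set C)
  mul_mem : ∀ {t s : G} {x y : C}, x ∈ fiber t → y ∈ fiber s → x * y ∈ fiber (t * s)
  star_mem : ∀ {t : G} {x : C}, x ∈ fiber t → star x ∈ fiber t⁻¹
  isInternal : DirectSum.IsInternal fiber

/-- A C*-algebraic bundle is saturated if the closed span of `A_t A_t*` is
`A_e` for every `t`. -/
def CStarBundle.Saturated {G : Type*} [Group G] [DecidableEq G] {C : Type*}
    [NormedRing C] [StarRing C] [NormedAlgebra ℂ C] (𝒜 : CStarBundle G C) : Prop :=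
  ∀ t, (Submodule.span ℂ
      {x : C | ∃ a ∈ 𝒜.fiber t, ∃ b ∈ 𝒜.fiber t, x = a * star b}).topologicalClosure
    = 𝒜.fiber 1

/-- The data of an equivalence bundle in the sense of Abadie–Ferraro between
two C*-algebraic bundles with fibers `Afib` (inside `C`) and `Bfib` (inside
`D`):  a grading `{X_t}_{t ∈ G}` of the `C`-`D`-bimodule `Y = ⊕_{t∈G} X_t`
which is compatible with the two bundle gradings (conditions (1R)-(7R) and
(1L)-(7L) of Abadie–Ferraro). -/
structure EquivBundleData {G : Type*} [Group G] [DecidableEq G] {C D Y : Type*}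
    [NormedRing C] [StarRing C] [NormedAlgebra ℂ C]
    [NormedRing D] [StarRing D] [NormedAlgebra ℂ D]
    [NormedAddCommGroup Y]
    (Afib : G → Submodule ℂ C) (Bfib : G → Submodule ℂ D)
    (E : HilbertBimod C D Y) where
  fiber : G → AddSubgroup Y
  fiber_closed : ∀ t, IsClosed (fiber t : Set Y)
  isInternal : DirectSum.IsInternal fiber
  lsmul_mem : ∀ {t s : G} {c : C} {x : Y}, c ∈ Afib t → x ∈ fiber s →
    E.lsmul c x ∈ fiber (t * s)
  rsmul_mem : ∀ {t s : G} {x : Y} {d : D}, x ∈ fiber t → d ∈ Bfib s →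
    E.rsmul x d ∈ fiber (t * s)
  linner_mem : ∀ {t s : G} {x y : Y}, x ∈ fiber t → y ∈ fiber s →
    E.linner x y ∈ Afib (t * s⁻¹)
  rinner_mem : ∀ {t s : G} {x y : Y}, x ∈ fiber t → y ∈ fiber s →
    E.rinner x y ∈ Bfib (t⁻¹ * s)

/-- The strengthened fullness conditions `⟨X_t , X_s⟩_C = A_{ts⁻¹}` and
`⟨X_t , X_s⟩_D = B_{t⁻¹s}` for an equivalence bundle. -/
def EquivBundleData.StrictSpan {G : Type*} [Group G] [DecidableEq G] {C D Y : Type*}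
    [NormedRing C] [StarRing C] [NormedAlgebra ℂ C]
    [NormedRing D] [StarRing D] [NormedAlgebra ℂ D]
    [NormedAddCommGroup Y]
    {Afib : G → Submodule ℂ C} {Bfib : G → Submodule ℂ D}
    {E : HilbertBimod C D Y} (Z : EquivBundleData Afib Bfib E) : Prop :=
  (∀ t s : G, Submodule.span ℂ
      {c : C | ∃ x ∈ Z.fiber t, ∃ y ∈ Z.fiber s, c = E.linner x y} = Afib (t * s⁻¹)) ∧
  (∀ t s : G, Submodule.span ℂ
      {d : D | ∃ x ∈ Z.fiber t, ∃ y ∈ Z.fiber s, d = E.rinner x y} = Bfib (t⁻¹ * s))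

/-- A witness of strong Morita equivalence of the unital inclusions
`A ⊆ C` and `B ⊆ D`:  a `C`-`D`-equivalence bimodule `Y` together with a
closed subspace `X₀ ⊆ Y` which is an `A`-`B`-equivalence bimodule and such
that `⟨Y , X₀⟩_C` is dense in `C` and `⟨Y , X₀⟩_D` is dense in `D`. -/
structure MoritaIncl (C D : Type*)
    [NormedRing C] [StarRing C] [NormedAlgebra ℂ C]
    [NormedRing D] [StarRing D] [NormedAlgebra ℂ D]
    (A : Submodule ℂ C) (B : Submodule ℂ D) where
  Y : Type
  [instN : NormedAddCommGroup Y]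
  [instC : CompleteSpace Y]
  E : HilbertBimod C D Y
  lFull : E.LFull
  rFull : E.RFull
  X₀ : AddSubgroup Y
  closed_X₀ : IsClosed (X₀ : Set Y)
  lsmul_mem : ∀ {a : C} {x : Y}, a ∈ A → x ∈ X₀ → E.lsmul a x ∈ X₀
  rsmul_mem : ∀ {x : Y} {b : D}, x ∈ X₀ → b ∈ B → E.rsmul x b ∈ X₀
  linner_mem : ∀ {x y : Y}, x ∈ X₀ → y ∈ X₀ → E.linner x y ∈ A
  rinner_mem : ∀ {x y : Y}, x ∈ X₀ → y ∈ X₀ → E.rinner x y ∈ B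
  linner_full : (Submodule.span ℂ
      {c : C | ∃ x ∈ X₀, ∃ y ∈ X₀, c = E.linner x y}).topologicalClosure = A
  rinner_full : (Submodule.span ℂ
      {d : D | ∃ x ∈ X₀, ∃ y ∈ X₀, d = E.rinner x y}).topologicalClosure = B
  linner_span : (Submodule.span ℂ
      {c : C | ∃ y : Y, ∃ x ∈ X₀, c = E.linner y x}).topologicalClosure = ⊤
  rinner_span : (Submodule.span ℂ
      {d : D | ∃ y : Y, ∃ x ∈ X₀, d = E.rinner y x}).topologicalClosure = ⊤

/-- Strong Morita equivalence of the unital inclusions `A ⊆ C` and `B ⊆ D`. -/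
def StronglyMoritaEquivalentIncl (C D : Type*)
    [NormedRing C] [StarRing C] [NormedAlgebra ℂ C]
    [NormedRing D] [StarRing D] [NormedAlgebra ℂ D]
    (A : Submodule ℂ C) (B : Submodule ℂ D) : Prop :=
  Nonempty (MoritaIncl C D A B)

/-!
The grading of `Y = ⊕_t X_t` makes the unit fibre `X_e` an `A_e`-`B_e`-bimodule with
`⟨X_e, X_e⟩_C = A_e` and `⟨X_e, X_e⟩_D = B_e`. Moreover `⟨X_t, X_e⟩_C = A_t` and
`⟨X_{t⁻¹}, X_e⟩_D = B_t` for every `t`, so `⟨Y, X_e⟩_C` and `⟨Y, X_e⟩_D` already span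
`⊕_t A_t = C` and `⊕_t B_t = D`: the pair `X_e ⊆ Y` witnesses the Morita equivalence.
-/

namespace EquivBundleData

variable {G : Type*} [Group G] [DecidableEq G] {C D Y : Type*}
  [NormedRing C] [StarRing C] [NormedAlgebra ℂ C]
  [NormedRing D] [StarRing D] [NormedAlgebra ℂ D] [NormedAddCommGroup Y]
  {Afib : G → Submodule ℂ C} {Bfib : G → Submodule ℂ D} {E : HilbertBimod C D Y}
  (Z : EquivBundleData Afib Bfib E)

theorem lsmul_mem_fiber_one {c : C} {x : Y} (hc : c ∈ Afib 1) (hx : x ∈ Z.fiber 1) :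
    E.lsmul c x ∈ Z.fiber 1 := by
  simpa using Z.lsmul_mem hc hx

theorem rsmul_mem_fiber_one {x : Y} {d : D} (hx : x ∈ Z.fiber 1) (hd : d ∈ Bfib 1) :
    E.rsmul x d ∈ Z.fiber 1 := by
  simpa using Z.rsmul_mem hx hd

theorem linner_mem_fiber_one {x y : Y} (hx : x ∈ Z.fiber 1) (hy : y ∈ Z.fiber 1) :
    E.linner x y ∈ Afib 1 := by
  simpa using Z.linner_mem hx hy

theorem rinner_mem_fiber_one {x y : Y} (hx : x ∈ Z.fiber 1) (hy : y ∈ Z.fiber 1) :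
    E.rinner x y ∈ Bfib 1 := by
  simpa using Z.rinner_mem hx hy

variable {Z}

theorem span_linner_fiber_one (hZ : Z.StrictSpan) :
    Submodule.span ℂ {c : C | ∃ x ∈ Z.fiber 1, ∃ y ∈ Z.fiber 1, c = E.linner x y} = Afib 1 := by
  simpa using hZ.1 1 1

theorem span_rinner_fiber_one (hZ : Z.StrictSpan) :
    Submodule.span ℂ {d : D | ∃ x ∈ Z.fiber 1, ∃ y ∈ Z.fiber 1, d = E.rinner x y} = Bfib 1 := by
  simpa using hZ.2 1 1

theorem span_linner_fiber_one_right_eq_top (hZ : Z.StrictSpan) (hA : ⨆ t, Afib t = ⊤) :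
    Submodule.span ℂ {c : C | ∃ y : Y, ∃ x ∈ Z.fiber 1, c = E.linner y x} = ⊤ := by
  refine top_unique (hA ▸ iSup_le fun t => ?_)
  have hAt : Submodule.span ℂ
      {c : C | ∃ y ∈ Z.fiber t, ∃ x ∈ Z.fiber 1, c = E.linner y x} = Afib t := by
    simpa using hZ.1 t 1
  rw [← hAt]
  exact Submodule.span_mono fun c ⟨y, _, x, hx, hc⟩ => ⟨y, x, hx, hc⟩

theorem span_rinner_fiber_one_right_eq_top (hZ : Z.StrictSpan) (hB : ⨆ t, Bfib t = ⊤) :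
    Submodule.span ℂ {d : D | ∃ y : Y, ∃ x ∈ Z.fiber 1, d = E.rinner y x} = ⊤ := by
  refine top_unique (hB ▸ iSup_le fun t => ?_)
  have hBt : Submodule.span ℂ
      {d : D | ∃ y ∈ Z.fiber t⁻¹, ∃ x ∈ Z.fiber 1, d = E.rinner y x} = Bfib t := by
    simpa using hZ.2 t⁻¹ 1
  rw [← hBt]
  exact Submodule.span_mono fun d ⟨y, _, x, hx, hd⟩ => ⟨y, x, hx, hd⟩

end EquivBundleData

def EquivBundleData.toMoritaIncl {G : Type*} [Group G] [DecidableEq G] {C D Y : Type}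
    [NormedRing C] [StarRing C] [NormedAlgebra ℂ C]
    [NormedRing D] [StarRing D] [NormedAlgebra ℂ D] [NormedAddCommGroup Y] [CompleteSpace Y]
    {Afib : G → Submodule ℂ C} {Bfib : G → Submodule ℂ D} {E : HilbertBimod C D Y}
    (Z : EquivBundleData Afib Bfib E) (hlF : E.LFull) (hrF : E.RFull) (hZ : Z.StrictSpan)
    (hA₁ : IsClosed (Afib 1 : Set C)) (hB₁ : IsClosed (Bfib 1 : Set D))
    (hA : ⨆ t, Afib t = ⊤) (hB : ⨆ t, Bfib t = ⊤) :
    MoritaIncl C D (Afib 1) (Bfib 1) where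
  Y := Y
  E := E
  lFull := hlF
  rFull := hrF
  X₀ := Z.fiber 1
  closed_X₀ := Z.fiber_closed 1
  lsmul_mem := Z.lsmul_mem_fiber_one
  rsmul_mem := Z.rsmul_mem_fiber_one
  linner_mem := Z.linner_mem_fiber_one
  rinner_mem := Z.rinner_mem_fiber_one
  linner_full := by rw [span_linner_fiber_one hZ, hA₁.submodule_topologicalClosure_eq]
  rinner_full := by rw [span_rinner_fiber_one hZ, hB₁.submodule_topologicalClosure_eq]
  linner_span := by
    rw [span_linner_fiber_one_right_eq_top hZ hA]
    exact top_unique (Submodule.le_topologicalClosure _)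
  rinner_span := by
    rw [span_rinner_fiber_one_right_eq_top hZ hB]
    exact top_unique (Submodule.le_topologicalClosure _)

theorem equivalence_bundle_implies_strong_morita_of_inclusions_general
    {G : Type} [Group G] [DecidableEq G]
    {C D : Type} [CStarAlgebra C] [CStarAlgebra D]
    (𝒜 : CStarBundle G C) (ℬ : CStarBundle G D)
    {Y : Type} [NormedAddCommGroup Y] [CompleteSpace Y]
    (E : HilbertBimod C D Y) (hlF : E.LFull) (hrF : E.RFull)
    (Z : EquivBundleData 𝒜.fiber ℬ.fiber E) (hZ : Z.StrictSpan) :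
    StronglyMoritaEquivalentIncl C D (𝒜.fiber 1) (ℬ.fiber 1) :=
  ⟨Z.toMoritaIncl hlF hrF hZ (𝒜.fiber_closed 1) (ℬ.fiber_closed 1)
    𝒜.isInternal.submodule_iSup_eq_top ℬ.isInternal.submodule_iSup_eq_top⟩

/-- Proposition 2.1 of the paper.
Let `𝒜 = {A_t}_{t∈G}` and `ℬ = {B_t}_{t∈G}` be C*-algebraic bundles over a
finite group `G`, with section C*-algebras `C = ⊕_t A_t` and `D = ⊕_t B_t`
unital and `1_C ∈ A_e`, `1_D ∈ B_e`.  If there exists an `𝒜`-`ℬ`-equivalence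
bundle `{X_t}_{t∈G}` with `⟨X_t , X_s⟩_C = A_{ts⁻¹}` and
`⟨X_t , X_s⟩_D = B_{t⁻¹s}` for all `t, s ∈ G`, then the unital inclusions
`A ⊆ C` and `B ⊆ D` are strongly Morita equivalent. -/
theorem equivalence_bundle_implies_strong_morita_of_inclusions
    {G : Type} [Group G] [Fintype G] [DecidableEq G]
    {C D : Type} [CStarAlgebra C] [CStarAlgebra D]
    (𝒜 : CStarBundle G C) (ℬ : CStarBundle G D)
    (h1A : (1 : C) ∈ 𝒜.fiber 1) (h1B : (1 : D) ∈ ℬ.fiber 1)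
    {Y : Type} [NormedAddCommGroup Y] [CompleteSpace Y]
    (E : HilbertBimod C D Y) (hlF : E.LFull) (hrF : E.RFull)
    (Z : EquivBundleData 𝒜.fiber ℬ.fiber E) (hZ : Z.StrictSpan) :
    StronglyMoritaEquivalentIncl C D (𝒜.fiber 1) (ℬ.fiber 1) :=
  equivalence_bundle_implies_strong_morita_of_inclusions_general 𝒜 ℬ E hlF hrF Z hZ
end
end

section
/- Let A = {A_t}_{t∈G} be a saturated C*-algebraic bundle over a finite group G, with C = ⊕_{t∈G} A_t unital and A = A_e containing the unit of C. Let E^A: C → A be the canonical conditional expectation, C₁ the C*-basic construction with Jones projection e_A, and α^A the action of G on C₁ induced by A (determined by α_t^A(c) = c for c ∈ C and α_t^A(e_A) = e_{t⁻¹}, where e_t = Σ_i x_i^t e_A (x_i^t)* for a finite set {x_i^t} ⊂ A_t with Σ_i x_i^t (x_i^t)* = 1). Let A₁ = {Y_{α_t^A}}_{t∈G} be the C*-algebraic bundle over G induced by α^A, with fibers Y_{α_t^A} = e_A C₁ α_t^A(e_A), product x • y = x α_t^A(y), and involution x^♯ = α_{t⁻¹}^A(x*). Then A and A₁ are isomorphic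 as C*-algebraic bundles over G; explicitly the maps π_t: A_t → Y_{α_t^A}, π_t(x) = e_A x, form an isometric C*-algebraic bundle isomorphism. -/
noncomputable section

open scoped BigOperators

/-- Lemma 3.1 of the paper.
Let `𝒜 = {A_t}_{t∈G}` be a saturated C*-algebraic bundle over a finite group
`G` with unital section algebra `C`, `E^A : C → A = A_e` the canonical
conditional expectation, `ι : C → C₁` the inclusion into the C*-basic
construction `C₁ = C e_A C` with Jones projection `e_A`, and `α^A` the action
of `G` on `C₁` induced by `𝒜` (so `α_t(c) = c` for `c ∈ C` and
`α_t(e_A) = e_{t⁻¹} = Σ_i x_i^{t⁻¹} e_A (x_i^{t⁻¹})*` where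
`{x_i^t} ⊆ A_t` with `Σ_i x_i^t (x_i^t)* = 1`).  Then the maps
`π_t : A_t → Y_{α_t} = e_A C₁ α_t(e_A)`, `π_t(x) = e_A x`, form an isometric
isomorphism of C*-algebraic bundles from `𝒜` onto
`𝒜₁ = {Y_{α_t}}_{t∈G}` (with product `x • y = x α_t(y)` and involution
`x^♯ = α_{t⁻¹}(x*)`). -/
theorem bundle_iso_basic_construction_bundle
    {G : Type} [Group G] [Fintype G] [DecidableEq G]
    {C : Type} [CStarAlgebra C]
    (𝒜 : CStarBundle G C) (hsat : 𝒜.Saturated) (h1A : (1 : C) ∈ 𝒜.fiber 1)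
    -- the canonical conditional expectation onto `A = A_e`:
    (EA : C →ₗ[ℂ] C)
    (hEA_mem : ∀ x : C, EA x ∈ 𝒜.fiber 1)
    (hEA_id : ∀ x ∈ 𝒜.fiber 1, EA x = x)
    (hEA_zero : ∀ t : G, t ≠ 1 → ∀ x ∈ 𝒜.fiber t, EA x = 0)
    -- the C*-basic construction `C₁` with Jones projection `e_A`:
    {C₁ : Type} [CStarAlgebra C₁]
    (ι : C →⋆ₐ[ℂ] C₁) (hι : Function.Injective ι)
    (eA : C₁) (heA_star : star eA = eA) (heA_idem : eA * eA = eA)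
    (heA_comm : ∀ a ∈ 𝒜.fiber 1, eA * ι a = ι a * eA)
    (heA_exp : ∀ x : C, eA * ι x * eA = ι (EA x) * eA)
    (hbasic : Submodule.span ℂ {z : C₁ | ∃ x y : C, z = ι x * eA * ι y} = ⊤)
    -- the induced action `α^A` of `G` on `C₁`:
    (α : G → C₁ ≃⋆ₐ[ℂ] C₁)
    (hα_one : ∀ z : C₁, α 1 z = z)
    (hα_mul : ∀ t s : G, ∀ z : C₁, α (t * s) z = α t (α s z))
    (hα_fix : ∀ t : G, ∀ x : C, α t (ι x) = ι x)
    -- the finite families `{x_i^t} ⊆ A_t` with `Σ_i x_i^t (x_i^t)* = 1`: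
    (n : G → ℕ) (xs : ∀ t : G, Fin (n t) → C)
    (hxs_mem : ∀ t i, xs t i ∈ 𝒜.fiber t)
    (hxs_sum : ∀ t, ∑ i, xs t i * star (xs t i) = 1)
    (hα_eA : ∀ t : G, α t eA = ∑ i, ι (xs t⁻¹ i) * eA * ι (star (xs t⁻¹ i))) :
    -- `π_t` maps `A_t` bijectively onto `Y_{α_t} = e_A C₁ α_t(e_A)` …
    (∀ t : G, ∀ x ∈ 𝒜.fiber t, ∃ z : C₁, eA * ι x = eA * z * α t eA) ∧
    (∀ t : G, ∀ z : C₁, ∃ x ∈ 𝒜.fiber t, eA * z * α t eA = eA * ι x) ∧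
    -- … isometrically …
    (∀ t : G, ∀ x ∈ 𝒜.fiber t, ‖eA * ι x‖ = ‖x‖) ∧
    -- … multiplicatively, `π_t(x) • π_s(y) = π_{ts}(xy)` …
    (∀ t s : G, ∀ x ∈ 𝒜.fiber t, ∀ y ∈ 𝒜.fiber s,
      (eA * ι x) * α t (eA * ι y) = eA * ι (x * y)) ∧
    -- … and compatibly with the involutions, `π_t(x)^♯ = π_{t⁻¹}(x*)`:
    (∀ t : G, ∀ x ∈ 𝒜.fiber t, α t⁻¹ (star (eA * ι x)) = eA * ι (star x)) := by
    classical
  -- ι is isometric (injective star homomorphism of C*-algebras)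
  have hιnorm : ∀ x : C, ‖ι x‖ = ‖x‖ := fun x =>
    NonUnitalStarAlgHom.norm_map ι hι x
  have hαnorm : ∀ (t : G) (z : C₁), ‖α t z‖ = ‖z‖ := fun t z =>
    NonUnitalStarAlgHom.norm_map (α t) (EquivLike.injective (α t)) z
  have norm_eA : ‖eA‖ ≤ 1 := by
    have h : ‖star eA * eA‖ = ‖eA‖ * ‖eA‖ := CStarRing.norm_star_mul_self
    rw [heA_star, heA_idem] at h
    nlinarith [sq_nonneg (‖eA‖ - 1), norm_nonneg eA]
  -- membership helpers
  have hmem1 : ∀ {t : G} {x y : C}, x ∈ 𝒜.fiber t → y ∈ 𝒜.fiber t⁻¹ →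
      x * y ∈ 𝒜.fiber 1 := by
    intro t x y hx hy
    simpa using 𝒜.mul_mem hx hy
  have hmem1' : ∀ {t : G} {x y : C}, x ∈ 𝒜.fiber t⁻¹ → y ∈ 𝒜.fiber t →
      x * y ∈ 𝒜.fiber 1 := by
    intro t x y hx hy
    simpa using 𝒜.mul_mem hx hy
  have hstar_mem : ∀ {t : G} {x : C}, x ∈ 𝒜.fiber t⁻¹ → star x ∈ 𝒜.fiber t := by
    intro t x hx
    simpa using 𝒜.star_mem hx
  -- the key computation: for `w ∈ A_s`, `ι w * α s eA = eA * ι w`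
  have HK : ∀ (s : G) (w : C), w ∈ 𝒜.fiber s → ι w * α s eA = eA * ι w := by
    intro s w hw
    rw [hα_eA s, Finset.mul_sum]
    have key : ∀ i : Fin (n s⁻¹), ι w * (ι (xs s⁻¹ i) * eA * ι (star (xs s⁻¹ i)))
        = eA * ι (w * (xs s⁻¹ i * star (xs s⁻¹ i))) := by
      intro i
      have h1 : w * xs s⁻¹ i ∈ 𝒜.fiber 1 := hmem1 hw (hxs_mem s⁻¹ i)
      calc ι w * (ι (xs s⁻¹ i) * eA * ι (star (xs s⁻¹ i)))
          = ι (w * xs s⁻¹ i) * eA * ι (star (xs s⁻¹ i)) := by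
            rw [map_mul]; simp only [mul_assoc]
        _ = eA * ι (w * xs s⁻¹ i) * ι (star (xs s⁻¹ i)) := by
            rw [heA_comm _ h1]
        _ = eA * ι (w * (xs s⁻¹ i * star (xs s⁻¹ i))) := by
            rw [map_mul, map_mul, map_mul]; simp only [mul_assoc]
    rw [Finset.sum_congr rfl fun i _ => key i, ← Finset.mul_sum, ← map_sum,
      ← Finset.mul_sum, hxs_sum, mul_one]
  -- consequence: `eA * ι x * α t eA = eA * ι x` for `x ∈ A_t`
  have K4 : ∀ (t : G) (x : C), x ∈ 𝒜.fiber t → eA * ι x * α t eA = eA * ι x := by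
    intro t x hx
    rw [mul_assoc, HK t x hx, ← mul_assoc, heA_idem]
  -- `q = Σ_t α_t(e_A) = 1`
  have hterm : ∀ (t : G) (b : C), b ∈ 𝒜.fiber t → ∀ s : G,
      α s eA * (ι b * eA) = if s = t⁻¹ then ι b * eA else 0 := by
    intro t b hb s
    rw [hα_eA s, Finset.sum_mul]
    have key : ∀ i : Fin (n s⁻¹), ι (xs s⁻¹ i) * eA * ι (star (xs s⁻¹ i)) * (ι b * eA)
        = ι (xs s⁻¹ i) * (ι (EA (star (xs s⁻¹ i) * b)) * eA) := by
      intro i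
      calc ι (xs s⁻¹ i) * eA * ι (star (xs s⁻¹ i)) * (ι b * eA)
          = ι (xs s⁻¹ i) * (eA * ι (star (xs s⁻¹ i) * b) * eA) := by
            rw [map_mul]; simp only [mul_assoc]
        _ = ι (xs s⁻¹ i) * (ι (EA (star (xs s⁻¹ i) * b)) * eA) := by
            rw [heA_exp]
    rw [Finset.sum_congr rfl fun i _ => key i]
    by_cases hs : s = t⁻¹
    · subst hs
      rw [if_pos rfl]
      have hEAi : ∀ i : Fin (n t⁻¹⁻¹), EA (star (xs t⁻¹⁻¹ i) * b)
          = star (xs t⁻¹⁻¹ i) * b := by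
        intro i
        exact hEA_id _ (hmem1' (hstar_mem (hxs_mem t⁻¹⁻¹ i)) hb)
      have : ∀ i : Fin (n t⁻¹⁻¹),
          ι (xs t⁻¹⁻¹ i) * (ι (EA (star (xs t⁻¹⁻¹ i) * b)) * eA)
          = ι (xs t⁻¹⁻¹ i * star (xs t⁻¹⁻¹ i)) * (ι b * eA) := by
        intro i
        rw [hEAi i, map_mul, map_mul]
        simp only [mul_assoc]
      rw [Finset.sum_congr rfl fun i _ => this i, ← Finset.sum_mul, ← map_sum,
        hxs_sum, map_one, one_mul]
    · rw [if_neg hs]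
      have hne : t⁻¹ * t ≠ 1 → True := fun _ => trivial
      have : ∀ i : Fin (n s⁻¹), EA (star (xs s⁻¹ i) * b) = 0 := by
        intro i
        have hmem : star (xs s⁻¹ i) * b ∈ 𝒜.fiber (s * t) :=
          𝒜.mul_mem (hstar_mem (hxs_mem s⁻¹ i)) hb
        have hst : s * t ≠ 1 := fun h => hs (mul_eq_one_iff_eq_inv.mp h)
        exact hEA_zero (s * t) hst _ hmem
      simp only [this, map_zero, zero_mul, mul_zero, Finset.sum_const_zero]
  have hq_fiber : ∀ (t : G) (b : C), b ∈ 𝒜.fiber t →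
      (∑ s : G, α s eA) * (ι b * eA) = ι b * eA := by
    intro t b hb
    rw [Finset.sum_mul]
    rw [Finset.sum_congr rfl fun s _ => hterm t b hb s]
    simp
  have hq_all : ∀ x : C, (∑ s : G, α s eA) * (ι x * eA) = ι x * eA := by
    intro x
    have hx : x ∈ ⨆ t, 𝒜.fiber t := by
      rw [𝒜.isInternal.submodule_iSup_eq_top]; trivial
    refine Submodule.iSup_induction (motive := fun x =>
        (∑ s : G, α s eA) * (ι x * eA) = ι x * eA) 𝒜.fiber hx
      (fun t b hb => hq_fiber t b hb) ?_ ?_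
    · show (∑ s : G, α s eA) * (ι (0 : C) * eA) = ι (0 : C) * eA
      simp
    · intro a b ha hb
      have ha' : (∑ s : G, α s eA) * (ι a * eA) = ι a * eA := ha
      have hb' : (∑ s : G, α s eA) * (ι b * eA) = ι b * eA := hb
      show (∑ s : G, α s eA) * (ι (a + b) * eA) = ι (a + b) * eA
      rw [map_add, add_mul, mul_add, ha', hb']
  have hq_one : (∑ s : G, α s eA) = 1 := by
    have hspan : ∀ z ∈ Submodule.span ℂ {z : C₁ | ∃ x y : C, z = ι x * eA * ι y},
        (∑ s : G, α s eA) * z = z := by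
      intro z hz
      induction hz using Submodule.span_induction with
      | mem z hz =>
        obtain ⟨x, y, rfl⟩ := hz
        calc (∑ s : G, α s eA) * (ι x * eA * ι y)
            = ((∑ s : G, α s eA) * (ι x * eA)) * ι y := by
              simp only [mul_assoc]
          _ = ι x * eA * ι y := by rw [hq_all]
      | zero => simp
      | add a b _ _ ha hb => rw [mul_add, ha, hb]
      | smul c a _ ha => rw [mul_smul_comm, ha]
    have h1 : (1 : C₁) ∈ Submodule.span ℂ
        {z : C₁ | ∃ x y : C, z = ι x * eA * ι y} := by
      rw [hbasic]; trivial
    simpa using hspan 1 h1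
  -- recovery estimate: `‖x‖ ≤ |G| ‖ι x e_A‖`
  have hrec : ∀ x : C, ‖x‖ ≤ (Fintype.card G : ℝ) * ‖ι x * eA‖ := by
    intro x
    have hx : ι x = ∑ s : G, α s (ι x * eA) := by
      have h : ∑ s : G, α s (ι x * eA) = ι x * ∑ s : G, α s eA := by
        rw [Finset.mul_sum]
        exact Finset.sum_congr rfl fun s _ => by rw [map_mul, hα_fix]
      rw [h, hq_one, mul_one]
    calc ‖x‖ = ‖ι x‖ := (hιnorm x).symm
      _ = ‖∑ s : G, α s (ι x * eA)‖ := by rw [← hx]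
      _ ≤ ∑ s : G, ‖α s (ι x * eA)‖ := norm_sum_le _ _
      _ = ∑ _s : G, ‖ι x * eA‖ := by
          exact Finset.sum_congr rfl fun s _ => hαnorm s _
      _ = (Fintype.card G : ℝ) * ‖ι x * eA‖ := by
          rw [Finset.sum_const, Finset.card_univ, nsmul_eq_mul]
  -- squaring identity for selfadjoint elements of `A_1`
  have hsq : ∀ a : C, a ∈ 𝒜.fiber 1 → star a = a →
      ‖ι (a * a) * eA‖ = ‖ι a * eA‖ * ‖ι a * eA‖ := by
    intro a ha hsa
    have hstarw : star (ι a * eA) = ι a * eA := by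
      rw [star_mul, heA_star, ← map_star, hsa, heA_comm _ ha]
    have hmul : (ι a * eA) * star (ι a * eA) = ι (a * a) * eA := by
      rw [hstarw]
      calc (ι a * eA) * (ι a * eA) = ι a * (eA * ι a * eA) := by
            simp only [mul_assoc]
        _ = ι a * (ι (EA a) * eA) := by rw [heA_exp]
        _ = ι a * (ι a * eA) := by rw [hEA_id _ ha]
        _ = ι (a * a) * eA := by rw [map_mul]; simp only [mul_assoc]
    rw [← hmul, CStarRing.norm_self_mul_star]
  -- `‖ι a e_A‖ = ‖a‖` for selfadjoint `a ∈ A_1`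
  have hNiso : ∀ a : C, a ∈ 𝒜.fiber 1 → star a = a → ‖ι a * eA‖ = ‖a‖ := by
    intro a ha hsa
    -- powers `a ^ 2 ^ m`
    have hpow : ∀ m : ℕ, (a ^ 2 ^ m ∈ 𝒜.fiber 1 ∧ star (a ^ 2 ^ m) = a ^ 2 ^ m)
        ∧ ‖a ^ 2 ^ m‖ = ‖a‖ ^ 2 ^ m ∧ ‖ι (a ^ 2 ^ m) * eA‖ = ‖ι a * eA‖ ^ 2 ^ m := by
      intro m
      induction m with
      | zero => simp [ha, hsa]
      | succ m ih =>
        obtain ⟨⟨hmem, hstar⟩, hn1, hn2⟩ := ih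
        have hsucc : a ^ 2 ^ (m + 1) = a ^ 2 ^ m * a ^ 2 ^ m := by
          rw [← pow_add]
          ring_nf
        have hmem' : a ^ 2 ^ (m + 1) ∈ 𝒜.fiber 1 := by
          rw [hsucc]
          simpa using 𝒜.mul_mem hmem hmem
        have hstar' : star (a ^ 2 ^ (m + 1)) = a ^ 2 ^ (m + 1) := by
          rw [hsucc, star_mul, hstar]
        have hnorm_sq : ‖a ^ 2 ^ m * a ^ 2 ^ m‖ = ‖a ^ 2 ^ m‖ * ‖a ^ 2 ^ m‖ := by
          nth_rewrite 1 [← hstar]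
          exact CStarRing.norm_star_mul_self
        refine ⟨⟨hmem', hstar'⟩, ?_, ?_⟩
        · rw [hsucc, hnorm_sq, hn1, pow_succ, pow_mul]
          ring
        · rw [hsucc, hsq _ hmem hstar, hn2, pow_succ, pow_mul]
          ring
    -- upper bound
    have hub : ‖ι a * eA‖ ≤ ‖a‖ := by
      calc ‖ι a * eA‖ ≤ ‖ι a‖ * ‖eA‖ := norm_mul_le _ _
        _ ≤ ‖a‖ * 1 := by
            rw [hιnorm]
            exact mul_le_mul_of_nonneg_left norm_eA (norm_nonneg a)
        _ = ‖a‖ := mul_one _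
    -- lower bound via iterated squaring
    have hlb : ‖a‖ ≤ ‖ι a * eA‖ := by
      by_contra hcon
      push_neg at hcon
      set X := ‖a‖ with hX
      set Y := ‖ι a * eA‖ with hY
      have hY0 : 0 ≤ Y := norm_nonneg _
      have hX0 : 0 < X := lt_of_le_of_lt hY0 hcon
      have hK1 : (1 : ℝ) ≤ (Fintype.card G : ℝ) := by
        exact_mod_cast Fintype.card_pos
      have hkey : ∀ m : ℕ, X ^ 2 ^ m ≤ (Fintype.card G : ℝ) * Y ^ 2 ^ m := by
        intro m
        obtain ⟨_, hn1, hn2⟩ := hpow m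
        calc X ^ 2 ^ m = ‖a ^ 2 ^ m‖ := hn1.symm
          _ ≤ (Fintype.card G : ℝ) * ‖ι (a ^ 2 ^ m) * eA‖ := hrec _
          _ = (Fintype.card G : ℝ) * Y ^ 2 ^ m := by rw [hn2]
      have hr1 : Y / X < 1 := (div_lt_one hX0).mpr hcon
      have hr0 : 0 ≤ Y / X := div_nonneg hY0 hX0.le
      have hge : ∀ m : ℕ, (1 : ℝ) ≤ (Fintype.card G : ℝ) * (Y / X) ^ m := by
        intro m
        have h1 : X ^ 2 ^ m ≤ (Fintype.card G : ℝ) * Y ^ 2 ^ m := hkey m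
        have hXp : 0 < X ^ 2 ^ m := pow_pos hX0 _
        have h2 : (1 : ℝ) ≤ (Fintype.card G : ℝ) * (Y / X) ^ 2 ^ m := by
          rw [div_pow, ← mul_div_assoc, le_div_iff₀ hXp, one_mul]
          exact h1
        have h3 : (Y / X) ^ 2 ^ m ≤ (Y / X) ^ m :=
          pow_le_pow_of_le_one hr0 hr1.le (Nat.lt_two_pow_self (n := m)).le
        calc (1 : ℝ) ≤ (Fintype.card G : ℝ) * (Y / X) ^ 2 ^ m := h2
          _ ≤ (Fintype.card G : ℝ) * (Y / X) ^ m := by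
              exact mul_le_mul_of_nonneg_left h3 (by linarith)
      have hlim : Filter.Tendsto (fun m : ℕ => (Fintype.card G : ℝ) * (Y / X) ^ m)
          Filter.atTop (nhds 0) := by
        have := tendsto_pow_atTop_nhds_zero_of_lt_one hr0 hr1
        simpa using this.const_mul (Fintype.card G : ℝ)
      have : (1 : ℝ) ≤ 0 := ge_of_tendsto hlim (Filter.Eventually.of_forall hge)
      linarith
    linarith
  refine ⟨?_, ?_, ?_, ?_, ?_⟩
  -- Goal 1
  · intro t x hx
    exact ⟨ι x, (K4 t x hx).symm⟩
  -- Goal 2: surjectivity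
  · intro t z
    have hz : z ∈ Submodule.span ℂ {z : C₁ | ∃ x y : C, z = ι x * eA * ι y} := by
      rw [hbasic]; trivial
    induction hz using Submodule.span_induction with
    | mem z hz =>
      obtain ⟨u, v, rfl⟩ := hz
      -- the element `w = Σ_i E_A(v x_i) (x_i)^*` of `A_t`
      set w : C := ∑ i, EA (v * xs t⁻¹ i) * star (xs t⁻¹ i) with hw
      have hw_mem : w ∈ 𝒜.fiber t := by
        refine Submodule.sum_mem _ fun i _ => ?_
        have h1 : EA (v * xs t⁻¹ i) ∈ 𝒜.fiber 1 := hEA_mem _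
        have h2 : star (xs t⁻¹ i) ∈ 𝒜.fiber t := hstar_mem (hxs_mem t⁻¹ i)
        simpa using 𝒜.mul_mem h1 h2
      have hSL : eA * ι v * α t eA = eA * ι w := by
        rw [hα_eA t, Finset.mul_sum]
        have key : ∀ i : Fin (n t⁻¹),
            eA * ι v * (ι (xs t⁻¹ i) * eA * ι (star (xs t⁻¹ i)))
            = eA * ι (EA (v * xs t⁻¹ i) * star (xs t⁻¹ i)) := by
          intro i
          calc eA * ι v * (ι (xs t⁻¹ i) * eA * ι (star (xs t⁻¹ i)))
              = (eA * ι (v * xs t⁻¹ i) * eA) * ι (star (xs t⁻¹ i)) := by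
                rw [map_mul]; simp only [mul_assoc]
            _ = ι (EA (v * xs t⁻¹ i)) * eA * ι (star (xs t⁻¹ i)) := by
                rw [heA_exp]
            _ = eA * ι (EA (v * xs t⁻¹ i)) * ι (star (xs t⁻¹ i)) := by
                rw [heA_comm _ (hEA_mem _)]
            _ = eA * ι (EA (v * xs t⁻¹ i) * star (xs t⁻¹ i)) := by
                rw [map_mul ι (EA (v * xs t⁻¹ i)) (star (xs t⁻¹ i))]
                simp only [mul_assoc]
        rw [Finset.sum_congr rfl fun i _ => key i, ← Finset.mul_sum, ← map_sum,
          ← hw]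
      refine ⟨EA u * w, ?_, ?_⟩
      · have h1 : EA u ∈ 𝒜.fiber 1 := hEA_mem u
        simpa using 𝒜.mul_mem h1 hw_mem
      · calc eA * (ι u * eA * ι v) * α t eA
            = (eA * ι u * eA) * (ι v * α t eA) := by simp only [mul_assoc]
          _ = ι (EA u) * eA * (ι v * α t eA) := by rw [heA_exp]
          _ = ι (EA u) * (eA * ι v * α t eA) := by simp only [mul_assoc]
          _ = ι (EA u) * (eA * ι w) := by rw [hSL]
          _ = (ι (EA u) * eA) * ι w := by simp only [mul_assoc]
          _ = (eA * ι (EA u)) * ι w := by rw [heA_comm _ (hEA_mem u)]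
          _ = eA * ι (EA u * w) := by
                rw [map_mul ι (EA u) w]; simp only [mul_assoc]
    | zero =>
      exact ⟨0, Submodule.zero_mem _, by simp⟩
    | add a b _ _ ha hb =>
      obtain ⟨xa, hxa, hea⟩ := ha
      obtain ⟨xb, hxb, heb⟩ := hb
      refine ⟨xa + xb, Submodule.add_mem _ hxa hxb, ?_⟩
      rw [map_add, mul_add, add_mul, mul_add, hea, heb]
    | smul c a _ ha =>
      obtain ⟨xa, hxa, hea⟩ := ha
      refine ⟨c • xa, Submodule.smul_mem _ _ hxa, ?_⟩
      rw [map_smul, mul_smul_comm, smul_mul_assoc, hea, mul_smul_comm]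
  -- Goal 3: isometry
  · intro t x hx
    have hmem : x * star x ∈ 𝒜.fiber 1 := hmem1 hx (𝒜.star_mem hx)
    have hsa : star (x * star x) = x * star x := by
      rw [star_mul, star_star]
    have hmul : (eA * ι x) * star (eA * ι x) = ι (x * star x) * eA := by
      calc (eA * ι x) * star (eA * ι x)
          = eA * ι x * (ι (star x) * eA) := by
            rw [star_mul, heA_star, ← map_star]
        _ = eA * ι (x * star x) * eA := by rw [map_mul]; simp only [mul_assoc]
        _ = ι (EA (x * star x)) * eA := by rw [heA_exp]
        _ = ι (x * star x) * eA := by rw [hEA_id _ hmem]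
    have h1 : ‖eA * ι x‖ * ‖eA * ι x‖ = ‖x‖ * ‖x‖ := by
      calc ‖eA * ι x‖ * ‖eA * ι x‖ = ‖(eA * ι x) * star (eA * ι x)‖ :=
            CStarRing.norm_self_mul_star.symm
        _ = ‖ι (x * star x) * eA‖ := by rw [hmul]
        _ = ‖x * star x‖ := hNiso _ hmem hsa
        _ = ‖x‖ * ‖x‖ := CStarRing.norm_self_mul_star
    exact (mul_self_inj_of_nonneg (norm_nonneg _) (norm_nonneg _)).mp h1
  -- Goal 4: multiplicativity
  · intro t s x hx y hy
    calc (eA * ι x) * α t (eA * ι y)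
        = (eA * ι x) * (α t eA * ι y) := by rw [map_mul, hα_fix]
      _ = (eA * ι x * α t eA) * ι y := by simp only [mul_assoc]
      _ = (eA * ι x) * ι y := by rw [K4 t x hx]
      _ = eA * ι (x * y) := by rw [map_mul]; simp only [mul_assoc]
  -- Goal 5: involution
  · intro t x hx
    have h1 : star (eA * ι x) = ι (star x) * eA := by
      rw [star_mul, heA_star, ← map_star]
    rw [h1, map_mul, hα_fix]
    exact HK t⁻¹ (star x) (𝒜.star_mem hx)
end
end

section
/- Let A = {A_t}_{t∈G} and B = {B_t}_{t∈G} be saturated C*-algebraic bundles over a finite group G with C = ⊕ A_t, D = ⊕ B_t unital, A = A_e, B = B_e containing the respective units, and suppose A' ∩ C = C1. Suppose the induced inclusions A ⊂ C and B ⊂ D are strongly Morita equivalent. Let f be an automorphism of G and λ an action of G on a C₁-D₁-equivalence bimodule Z implementing a strong Morita equivalence between the induced action α^A on the basic construction C₁ and the action β = α^B ∘ f on D₁. Let Z_t = e_A · Z · β_t(e_B) with the C-D-bimodule structure defined via λ (namely e_A x α_t^A(e_A) ◇ z = e_A x α_t^A(e_A) · λ_t(z), ⟨z, w⟩ taken as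 twisted C₁- and D₁-valued inner products as in the paper). Then Z = {Z_t}_{t∈G} satisfies conditions (4R) and (4L) of Abadie–Ferraro: the right D-valued inner product is D-linear in the second variable and satisfies ⟨z, w⟩_D^♯ = ⟨w, z⟩_D, and the left C-valued inner product is C-linear in the first variable and satisfies ⟨z, w⟩_C^♯ = ⟨w, z⟩_C. -/
noncomputable section

open scoped BigOperators

section TwistedBimodule

variable {G : Type*} [Group G] {C₁ D₁ Z : Type*}
  [NormedRing C₁] [StarRing C₁] [NormedAlgebra ℂ C₁]
  [NormedRing D₁] [StarRing D₁] [NormedAlgebra ℂ D₁]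
  [NormedAddCommGroup Z]

/-- The element `e_A · z · β_t(e_B)` of the fiber `Z_t = e_A · Z · β_t(e_B)`. -/
def Zel (E : HilbertBimod C₁ D₁ Z) (eA : C₁) (eB : D₁)
    (β : G → D₁ ≃⋆ₐ[ℂ] D₁) (t : G) (z : Z) : Z :=
  E.lsmul eA (E.rsmul z (β t eB))

/-- The left action `c ◇ p = c · λ_t(p)` of a degree-`t` element `c` of
`C = ⊕_t e_A C₁ α_t(e_A)` on `W = ⊕_t Z_t`. -/
def Lact (E : HilbertBimod C₁ D₁ Z) (lam : G → Z → Z) (t : G) (c : C₁) (p : Z) : Z :=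
  E.lsmul c (lam t p)

/-- The right action `p ◇ d = p · β_t(d)` of `d ∈ D = ⊕_s e_B D₁ β_s(e_B)` on a
degree-`t` element `p ∈ Z_t` of `W = ⊕_t Z_t`. -/
def Ract (E : HilbertBimod C₁ D₁ Z) (β : G → D₁ ≃⋆ₐ[ℂ] D₁) (t : G) (p : Z) (d : D₁) : Z :=
  E.rsmul p (β t d)

/-- The `C`-valued inner product `⟨p , q⟩_C = ⟨p , λ_{ts⁻¹}(q)⟩_{C₁}` of
`p ∈ Z_t` and `q ∈ Z_s`. -/
def Lin (E : HilbertBimod C₁ D₁ Z) (lam : G → Z → Z) (t s : G) (p q : Z) : C₁ :=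
  E.linner p (lam (t * s⁻¹) q)

/-- The `D`-valued inner product `⟨p , q⟩_D = β_{t⁻¹}(⟨p , q⟩_{D₁})` of
`p ∈ Z_t` and `q ∈ Z_s`. -/
def Rin (E : HilbertBimod C₁ D₁ Z) (β : G → D₁ ≃⋆ₐ[ℂ] D₁) (t : G) (p q : Z) : D₁ :=
  β t⁻¹ (E.rinner p q)

end TwistedBimodule

/-!
The four identities hold for arbitrary `p, q ∈ Z` in place of elements of the fibres `Z_t`.
(4R) is the right `D₁`-linearity and symmetry of `⟨·,·⟩_{D₁}`, transported by
`β_{t⁻¹} ∘ β_s = β_{t⁻¹ s}`; (4L) is the left `C₁`-linearity and symmetry of `⟨·,·⟩_{C₁}`,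
transported by the equivariance `⟨λ_g x, λ_g y⟩_{C₁} = α_g ⟨x, y⟩_{C₁}` and `λ_g ∘ λ_h = λ_{gh}`.
-/

section TwistedInnerProducts

variable {G : Type*} [Group G] {C₁ D₁ Z : Type*}
  [NormedRing C₁] [StarRing C₁] [NormedRing D₁] [StarRing D₁] [NormedAddCommGroup Z]
  (E : HilbertBimod C₁ D₁ Z)

theorem rin_ract [NormedAlgebra ℂ D₁] (β : G → D₁ ≃⋆ₐ[ℂ] D₁)
    (hβ_mul : ∀ t s : G, ∀ z : D₁, β (t * s) z = β t (β s z)) (t s : G) (p q : Z) (d : D₁) :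
    Rin E β t p (Ract E β s q d) = Rin E β t p q * β (t⁻¹ * s) d := by
  rw [Rin, Ract, E.rinner_rsmul_right, map_mul, hβ_mul, Rin]

theorem rin_conj_symm [NormedAlgebra ℂ D₁] (β : G → D₁ ≃⋆ₐ[ℂ] D₁)
    (hβ_mul : ∀ t s : G, ∀ z : D₁, β (t * s) z = β t (β s z)) (t s : G) (p q : Z) :
    β (t⁻¹ * s)⁻¹ (star (Rin E β t p q)) = Rin E β s q p := by
  rw [Rin, ← map_star, E.rinner_star, ← hβ_mul, Rin, mul_inv_rev, inv_inv,
    mul_inv_cancel_right]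

theorem lin_lact [NormedAlgebra ℂ C₁] (α : G → C₁ ≃⋆ₐ[ℂ] C₁) (lam : G → Z → Z)
    (hlam_mul : ∀ t s : G, ∀ x : Z, lam (t * s) x = lam t (lam s x))
    (hlam_linner : ∀ t : G, ∀ x y : Z, E.linner (lam t x) (lam t y) = α t (E.linner x y))
    (t s r : G) (p q : Z) (c : C₁) :
    Lin E lam (r * t) s (Lact E lam r c p) q = c * α r (Lin E lam t s p q) := by
  rw [Lin, Lact, E.linner_lsmul_left, mul_assoc, hlam_mul, hlam_linner, Lin]

theorem lin_conj_symm [NormedAlgebra ℂ C₁] (α : G → C₁ ≃⋆ₐ[ℂ] C₁) (lam : G → Z → Z)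
    (hlam_one : ∀ x : Z, lam 1 x = x)
    (hlam_mul : ∀ t s : G, ∀ x : Z, lam (t * s) x = lam t (lam s x))
    (hlam_linner : ∀ t : G, ∀ x y : Z, E.linner (lam t x) (lam t y) = α t (E.linner x y))
    (t s : G) (p q : Z) :
    α (t * s⁻¹)⁻¹ (star (Lin E lam t s p q)) = Lin E lam s t q p := by
  rw [Lin, E.linner_star, ← hlam_linner, ← hlam_mul, inv_mul_cancel, hlam_one, Lin,
    mul_inv_rev, inv_inv]

end TwistedInnerProducts

theorem twisted_bundle_conditions_4R_4L_general
    {G : Type} [Group G]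
    {C₁ D₁ : Type} [CStarAlgebra C₁] [CStarAlgebra D₁]
    -- the Jones projections `e_A ∈ C₁`, `e_B ∈ D₁`:
    (eA : C₁)
    (eB : D₁)
    -- the action `α = α^𝒜` of `G` on `C₁` and the action `β = α^ℬ ∘ f` on `D₁`:
    (α : G → C₁ ≃⋆ₐ[ℂ] C₁)
    (β : G → D₁ ≃⋆ₐ[ℂ] D₁)
    (hβ_mul : ∀ t s : G, ∀ z : D₁, β (t * s) z = β t (β s z))
    -- the `C₁`-`D₁`-equivalence bimodule `Z`:
    {Z : Type} [NormedAddCommGroup Z]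
    (E : HilbertBimod C₁ D₁ Z)
    -- the action `λ` of `G` on `Z` implementing the strong Morita
    -- equivalence of `α` and `β`:
    (lam : G → Z → Z)
    (hlam_one : ∀ x : Z, lam 1 x = x)
    (hlam_mul : ∀ t s : G, ∀ x : Z, lam (t * s) x = lam t (lam s x))
    (hlam_linner : ∀ t : G, ∀ x y : Z,
      E.linner (lam t x) (lam t y) = α t (E.linner x y))
    :
    -- (4R): `⟨z_t , w_s ◇ d⟩_D = ⟨z_t , w_s⟩_D • d` for `d = e_B y β_r(e_B)` …
    (∀ t s r : G, ∀ z w : Z, ∀ y : D₁,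
      Rin E β t (Zel E eA eB β t z)
          (Ract E β s (Zel E eA eB β s w) (eB * y * β r eB))
        = Rin E β t (Zel E eA eB β t z) (Zel E eA eB β s w)
            * β (t⁻¹ * s) (eB * y * β r eB)) ∧
    -- … and `⟨z_t , w_s⟩_D^♯ = ⟨w_s , z_t⟩_D`:
    (∀ t s : G, ∀ z w : Z,
      β (t⁻¹ * s)⁻¹ (star (Rin E β t (Zel E eA eB β t z) (Zel E eA eB β s w)))
        = Rin E β s (Zel E eA eB β s w) (Zel E eA eB β t z)) ∧
    -- (4L): `⟨c ◇ z_t , w_s⟩_C = c • ⟨z_t , w_s⟩_C` for `c = e_A x α_r(e_A)` …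
    (∀ t s r : G, ∀ z w : Z, ∀ x : C₁,
      Lin E lam (r * t) s
          (Lact E lam r (eA * x * α r eA) (Zel E eA eB β t z)) (Zel E eA eB β s w)
        = (eA * x * α r eA) * α r (Lin E lam t s (Zel E eA eB β t z) (Zel E eA eB β s w))) ∧
    -- … and `⟨z_t , w_s⟩_C^♯ = ⟨w_s , z_t⟩_C`:
    (∀ t s : G, ∀ z w : Z,
      α (t * s⁻¹)⁻¹ (star (Lin E lam t s (Zel E eA eB β t z) (Zel E eA eB β s w)))
        = Lin E lam s t (Zel E eA eB β s w) (Zel E eA eB β t z)) :=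
  ⟨fun t s _ _ _ _ => rin_ract E β hβ_mul t s _ _ _,
    fun t s _ _ => rin_conj_symm E β hβ_mul t s _ _,
    fun t s r _ _ _ => lin_lact E α lam hlam_mul hlam_linner t s r _ _ _,
    fun t s _ _ => lin_conj_symm E α lam hlam_one hlam_mul hlam_linner t s _ _⟩

/-- Lemma 4.1 of the paper.
With `Z_t = e_A · Z · β_t(e_B)` and the bimodule operations on
`W = ⊕_{t∈G} Z_t` obtained by twisting the `C₁`-`D₁`-bimodule structure of
`Z` by `λ` and `β`, the bundle `{Z_t}_{t∈G}` satisfies conditions (4R) and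
(4L) of Abadie–Ferraro:  the right `D`-valued inner product is `D`-linear in
the second variable and satisfies `⟨z , w⟩_D^♯ = ⟨w , z⟩_D`, and the left
`C`-valued inner product is `C`-linear in the first variable and satisfies
`⟨z , w⟩_C^♯ = ⟨w , z⟩_C`. -/
theorem twisted_bundle_conditions_4R_4L
    {G : Type} [Group G] [Fintype G] [DecidableEq G]
    {C₁ D₁ : Type} [CStarAlgebra C₁] [CStarAlgebra D₁]
    -- the Jones projections `e_A ∈ C₁`, `e_B ∈ D₁`:
    (eA : C₁) (heA_star : star eA = eA) (heA_idem : eA * eA = eA)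
    (eB : D₁) (heB_star : star eB = eB) (heB_idem : eB * eB = eB)
    -- the action `α = α^𝒜` of `G` on `C₁` and the action `β = α^ℬ ∘ f` on `D₁`:
    (α : G → C₁ ≃⋆ₐ[ℂ] C₁)
    (hα_one : ∀ z : C₁, α 1 z = z)
    (hα_mul : ∀ t s : G, ∀ z : C₁, α (t * s) z = α t (α s z))
    (β : G → D₁ ≃⋆ₐ[ℂ] D₁)
    (hβ_one : ∀ z : D₁, β 1 z = z)
    (hβ_mul : ∀ t s : G, ∀ z : D₁, β (t * s) z = β t (β s z))
    -- the `C₁`-`D₁`-equivalence bimodule `Z`: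
    {Z : Type} [NormedAddCommGroup Z] [CompleteSpace Z]
    (E : HilbertBimod C₁ D₁ Z) (hlF : E.LFull) (hrF : E.RFull)
    -- the action `λ` of `G` on `Z` implementing the strong Morita
    -- equivalence of `α` and `β`:
    (lam : G → Z → Z)
    (hlam_add : ∀ t : G, ∀ x y : Z, lam t (x + y) = lam t x + lam t y)
    (hlam_one : ∀ x : Z, lam 1 x = x)
    (hlam_mul : ∀ t s : G, ∀ x : Z, lam (t * s) x = lam t (lam s x))
    (hlam_lsmul : ∀ t : G, ∀ (c : C₁) (x : Z),
      lam t (E.lsmul c x) = E.lsmul (α t c) (lam t x))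
    (hlam_rsmul : ∀ t : G, ∀ (x : Z) (d : D₁),
      lam t (E.rsmul x d) = E.rsmul (lam t x) (β t d))
    (hlam_linner : ∀ t : G, ∀ x y : Z,
      E.linner (lam t x) (lam t y) = α t (E.linner x y))
    (hlam_rinner : ∀ t : G, ∀ x y : Z,
      E.rinner (lam t x) (lam t y) = β t (E.rinner x y))
    :
    -- (4R): `⟨z_t , w_s ◇ d⟩_D = ⟨z_t , w_s⟩_D • d` for `d = e_B y β_r(e_B)` …
    (∀ t s r : G, ∀ z w : Z, ∀ y : D₁,
      Rin E β t (Zel E eA eB β t z)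
          (Ract E β s (Zel E eA eB β s w) (eB * y * β r eB))
        = Rin E β t (Zel E eA eB β t z) (Zel E eA eB β s w)
            * β (t⁻¹ * s) (eB * y * β r eB)) ∧
    -- … and `⟨z_t , w_s⟩_D^♯ = ⟨w_s , z_t⟩_D`:
    (∀ t s : G, ∀ z w : Z,
      β (t⁻¹ * s)⁻¹ (star (Rin E β t (Zel E eA eB β t z) (Zel E eA eB β s w)))
        = Rin E β s (Zel E eA eB β s w) (Zel E eA eB β t z)) ∧
    -- (4L): `⟨c ◇ z_t , w_s⟩_C = c • ⟨z_t , w_s⟩_C` for `c = e_A x α_r(e_A)` …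
    (∀ t s r : G, ∀ z w : Z, ∀ x : C₁,
      Lin E lam (r * t) s
          (Lact E lam r (eA * x * α r eA) (Zel E eA eB β t z)) (Zel E eA eB β s w)
        = (eA * x * α r eA) * α r (Lin E lam t s (Zel E eA eB β t z) (Zel E eA eB β s w))) ∧
    -- … and `⟨z_t , w_s⟩_C^♯ = ⟨w_s , z_t⟩_C`:
    (∀ t s : G, ∀ z w : Z,
      α (t * s⁻¹)⁻¹ (star (Lin E lam t s (Zel E eA eB β t z) (Zel E eA eB β s w)))
        = Lin E lam s t (Zel E eA eB β s w) (Zel E eA eB β t z)) :=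
  twisted_bundle_conditions_4R_4L_general eA eB α β hβ_mul E lam hlam_one hlam_mul hlam_linner
end
end

section
/- With the setup of the bimodule W = ⊕_{t∈G} Z_t, Z_t = e_A · Z · β_t(e_B): the left C-valued and right D-valued inner products on W are compatible (⟨z, y⟩_C ◇ w = z ◇ ⟨y, w⟩_D for homogeneous z, y, w), and for all t, s ∈ G one has ⟨Z_t, Z_s⟩_C = Y_{α_{ts⁻¹}^A} = e_A C₁ α_{ts⁻¹}^A(e_A) and ⟨Z_t, Z_s⟩_D = Y_{β_{t⁻¹s}} = e_B D₁ β_{t⁻¹s}(e_B). Consequently Z = {Z_t}_{t∈G} is an A₁-B₁^f-equivalence bundle over G, where A₁ = {e_A C₁ α_t^A(e_A)}_{t∈G} and B₁^f = {e_B D₁ β_t(e_B)}_{t∈G}. -/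
/-!
Compatibility of the two inner products on `⊕ₜ Z_t` is the associativity
`⟨x, y⟩_{C₁} • z = x • ⟨y, z⟩_{D₁}` of `Z`, transported along `λ`, which carries `⟨·, ·⟩_{D₁}`
to its `β`-image. For the fibres: an inner product of `Z_t` with `Z_s` has the shape
`e_A ⟨·, ·⟩ α_{ts⁻¹}(e_A)` (resp. `e_B β_{t⁻¹}⟨·, ·⟩ β_{t⁻¹s}(e_B)`), which is one inclusion.
For the other, insert the quasi-basis `1 = Σ β_t(dⱼ) β_t(e_B) β_t(dⱼ)*` (resp.
`1 = Σ cⱼ e_A cⱼ*`) into `x = Σ ⟨x zᵢ, zᵢ⟩` (resp. `y = Σ ⟨wᵢ, wᵢ y⟩`) and move the `dⱼ`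
(resp. `cⱼ`) across the inner product: this writes every `e_A x α_{ts⁻¹}(e_A)`
(resp. `e_B y β_{t⁻¹s}(e_B)`) as a sum of inner products of elements of `Z_t` and `Z_s`.
-/

noncomputable section

open scoped BigOperators

namespace HilbertBimod

variable {C D Y : Type*} [NormedRing C] [StarRing C] [NormedRing D] [StarRing D]
  [NormedAddCommGroup Y] (E : HilbertBimod C D Y)

lemma linner_lsmul_right (x y : Y) (c : C) :
    E.linner x (E.lsmul c y) = E.linner x y * star c := by
  rw [← E.linner_star, E.linner_lsmul_left, star_mul, E.linner_star]

lemma rinner_rsmul_left (x y : Y) (d : D) :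
    E.rinner (E.rsmul x d) y = star d * E.rinner x y := by
  rw [← E.rinner_star, E.rinner_rsmul_right, star_mul, E.rinner_star]

lemma sum_lsmul {ι : Type*} (s : Finset ι) (f : ι → C) (x : Y) :
    E.lsmul (∑ i ∈ s, f i) x = ∑ i ∈ s, E.lsmul (f i) x :=
  map_sum (AddMonoidHom.mk' (E.lsmul · x) (E.add_lsmul · · x)) f s

lemma rsmul_sum {ι : Type*} (s : Finset ι) (x : Y) (f : ι → D) :
    E.rsmul x (∑ i ∈ s, f i) = ∑ i ∈ s, E.rsmul x (f i) :=
  map_sum (AddMonoidHom.mk' (E.rsmul x) (E.add_rsmul x)) f s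

lemma linner_sum_right {ι : Type*} (s : Finset ι) (x : Y) (f : ι → Y) :
    E.linner x (∑ i ∈ s, f i) = ∑ i ∈ s, E.linner x (f i) :=
  map_sum (AddMonoidHom.mk' (E.linner x) (E.linner_add_right x)) f s

lemma rinner_sum_right {ι : Type*} (s : Finset ι) (x : Y) (f : ι → Y) :
    E.rinner x (∑ i ∈ s, f i) = ∑ i ∈ s, E.rinner x (f i) :=
  map_sum (AddMonoidHom.mk' (E.rinner x) (E.rinner_add_right x)) f s

lemma sum_linner_lsmul_eq {k : ℕ} {zs : Fin k → Y} (hzs : ∑ i, E.linner (zs i) (zs i) = 1)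
    (c : C) : ∑ i, E.linner (E.lsmul c (zs i)) (zs i) = c := by
  simp only [E.linner_lsmul_left, ← Finset.mul_sum, hzs, mul_one]

lemma sum_rinner_rsmul_eq {k : ℕ} {ws : Fin k → Y} (hws : ∑ i, E.rinner (ws i) (ws i) = 1)
    (d : D) : ∑ i, E.rinner (ws i) (E.rsmul (ws i) d) = d := by
  simp only [E.rinner_rsmul_right, ← Finset.sum_mul, hws, one_mul]

lemma eq_of_forall_lsmul_eq {k : ℕ} {zs : Fin k → Y} (hzs : ∑ i, E.linner (zs i) (zs i) = 1)
    {c c' : C} (h : ∀ v, E.lsmul c v = E.lsmul c' v) : c = c' := by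
  rw [← E.sum_linner_lsmul_eq hzs c, ← E.sum_linner_lsmul_eq hzs c']
  simp only [h]

lemma eq_of_forall_rsmul_eq {k : ℕ} {ws : Fin k → Y} (hws : ∑ i, E.rinner (ws i) (ws i) = 1)
    {d d' : D} (h : ∀ v, E.rsmul v d = E.rsmul v d') : d = d' := by
  rw [← E.sum_rinner_rsmul_eq hws d, ← E.sum_rinner_rsmul_eq hws d']
  simp only [h]

/-- By associativity of the inner products, both sides act on any `v` as `z • ⟨y • star d, v⟩_D`. -/
lemma linner_rsmul_left {k : ℕ} {zs : Fin k → Y} (hzs : ∑ i, E.linner (zs i) (zs i) = 1)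
    (z y : Y) (d : D) : E.linner (E.rsmul z d) y = E.linner z (E.rsmul y (star d)) := by
  refine E.eq_of_forall_lsmul_eq hzs fun v => ?_
  rw [E.inner_assoc, E.inner_assoc, ← E.rsmul_mul, E.rinner_rsmul_left, star_star]

lemma rinner_lsmul_left {k : ℕ} {ws : Fin k → Y} (hws : ∑ i, E.rinner (ws i) (ws i) = 1)
    (x y : Y) (c : C) : E.rinner (E.lsmul c x) y = E.rinner x (E.lsmul (star c) y) := by
  refine E.eq_of_forall_rsmul_eq hws fun v => ?_
  rw [← E.inner_assoc, ← E.inner_assoc, E.linner_lsmul_right, E.mul_lsmul]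

lemma eq_sum_linner_rsmul {k : ℕ} {zs : Fin k → Y} (hzs : ∑ i, E.linner (zs i) (zs i) = 1)
    {n : ℕ} {us : Fin n → D} {d : D} (hus : ∑ j, us j * d * star (us j) = 1) (c : C) :
    c = ∑ i, ∑ j,
      E.linner (E.rsmul (E.lsmul c (zs i)) (us j)) (E.rsmul (E.rsmul (zs i) (us j)) d) := by
  calc c = ∑ i, E.linner (E.lsmul c (zs i)) (E.rsmul (zs i) (∑ j, us j * d * star (us j))) := by
        rw [hus]; simp only [E.rsmul_one, E.sum_linner_lsmul_eq hzs]
    _ = _ := by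
        refine Finset.sum_congr rfl fun i _ => ?_
        simp only [E.linner_rsmul_left hzs, ← E.rsmul_mul, E.rsmul_sum, E.linner_sum_right]

lemma eq_sum_rinner_lsmul {k : ℕ} {ws : Fin k → Y} (hws : ∑ i, E.rinner (ws i) (ws i) = 1)
    {n : ℕ} {us : Fin n → C} {e : C} (hus : ∑ j, us j * e * star (us j) = 1) (d : D) :
    d = ∑ i, ∑ j, E.rinner (E.lsmul (star (us j)) (ws i))
      (E.lsmul e (E.lsmul (star (us j)) (E.rsmul (ws i) d))) := by
  calc d = ∑ i, E.rinner (ws i) (E.lsmul (∑ j, us j * e * star (us j)) (E.rsmul (ws i) d)) := by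
        rw [hus]; simp only [E.one_lsmul, E.sum_rinner_rsmul_eq hws]
    _ = _ := by
        refine Finset.sum_congr rfl fun i _ => ?_
        simp only [E.rinner_lsmul_left hws, star_star, ← E.mul_lsmul, ← mul_assoc, E.sum_lsmul,
          E.rinner_sum_right]

end HilbertBimod

section TwistedBimodule

variable {G : Type*} [Group G] {C₁ D₁ Z : Type*}
  [NormedRing C₁] [StarRing C₁] [NormedRing D₁] [StarRing D₁] [NormedAlgebra ℂ D₁]
  [NormedAddCommGroup Z] (E : HilbertBimod C₁ D₁ Z) {eA : C₁} {eB : D₁}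
  {β : G → D₁ ≃⋆ₐ[ℂ] D₁} {lam : G → Z → Z}

lemma lact_lin_eq_ract_rin (hβ_mul : ∀ t s : G, ∀ z : D₁, β (t * s) z = β t (β s z))
    (hlam_rinner : ∀ t : G, ∀ x y : Z, E.rinner (lam t x) (lam t y) = β t (E.rinner x y))
    (t s : G) (p q w : Z) :
    Lact E lam (t * s⁻¹) (Lin E lam t s p q) w = Ract E β t p (Rin E β s q w) := by
  rw [Lact, Lin, Ract, Rin, E.inner_assoc, hlam_rinner, hβ_mul]

lemma lin_zel_zel [NormedAlgebra ℂ C₁] {α : G → C₁ ≃⋆ₐ[ℂ] C₁}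
    (heA_star : star eA = eA) (heB_star : star eB = eB) (heB_idem : eB * eB = eB)
    (hβ_mul : ∀ t s : G, ∀ z : D₁, β (t * s) z = β t (β s z))
    (hlam_lsmul : ∀ t : G, ∀ (c : C₁) (x : Z), lam t (E.lsmul c x) = E.lsmul (α t c) (lam t x))
    (hlam_rsmul : ∀ t : G, ∀ (x : Z) (d : D₁), lam t (E.rsmul x d) = E.rsmul (lam t x) (β t d))
    {k : ℕ} {zs : Fin k → Z} (hzs : ∑ i, E.linner (zs i) (zs i) = 1) (t s : G) (z w : Z) :
    Lin E lam t s (Zel E eA eB β t z) (Zel E eA eB β s w)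
      = eA * E.linner z (E.rsmul (lam (t * s⁻¹) w) (β t eB)) * α (t * s⁻¹) eA := by
  rw [Lin, Zel, Zel, hlam_lsmul, hlam_rsmul, ← hβ_mul, inv_mul_cancel_right,
    E.linner_lsmul_left, E.linner_lsmul_right, ← map_star, heA_star, E.linner_rsmul_left hzs,
    ← E.rsmul_mul, ← map_star, heB_star, ← map_mul, heB_idem, mul_assoc]

lemma rin_zel_zel (heA_star : star eA = eA) (heA_idem : eA * eA = eA) (heB_star : star eB = eB)
    (hβ_one : ∀ z : D₁, β 1 z = z) (hβ_mul : ∀ t s : G, ∀ z : D₁, β (t * s) z = β t (β s z))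
    {k : ℕ} {ws : Fin k → Z} (hws : ∑ i, E.rinner (ws i) (ws i) = 1) (t s : G) (z w : Z) :
    Rin E β t (Zel E eA eB β t z) (Zel E eA eB β s w)
      = eB * β t⁻¹ (E.rinner z (E.lsmul eA w)) * β (t⁻¹ * s) eB := by
  rw [Rin, Zel, Zel, E.rinner_lsmul_left hws, heA_star, ← E.mul_lsmul, heA_idem,
    E.rinner_rsmul_left, ← E.lsmul_rsmul, E.rinner_rsmul_right, ← map_star, heB_star,
    map_mul, map_mul, ← hβ_mul, inv_mul_cancel, hβ_one, ← hβ_mul, ← mul_assoc]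

lemma span_lin_zel_eq [NormedAlgebra ℂ C₁] {α : G → C₁ ≃⋆ₐ[ℂ] C₁}
    (heA_star : star eA = eA) (heB_star : star eB = eB) (heB_idem : eB * eB = eB)
    (hβ_mul : ∀ t s : G, ∀ z : D₁, β (t * s) z = β t (β s z))
    (hlam_one : ∀ x : Z, lam 1 x = x)
    (hlam_mul : ∀ t s : G, ∀ x : Z, lam (t * s) x = lam t (lam s x))
    (hlam_lsmul : ∀ t : G, ∀ (c : C₁) (x : Z), lam t (E.lsmul c x) = E.lsmul (α t c) (lam t x))
    (hlam_rsmul : ∀ t : G, ∀ (x : Z) (d : D₁), lam t (E.rsmul x d) = E.rsmul (lam t x) (β t d))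
    {kd : ℕ} {ds : Fin kd → D₁} (hds : ∑ j, ds j * eB * star (ds j) = 1)
    {kz : ℕ} {zs : Fin kz → Z} (hzs : ∑ i, E.linner (zs i) (zs i) = 1) (t s : G) :
    Submodule.span ℂ
        {c : C₁ | ∃ z w : Z, c = Lin E lam t s (Zel E eA eB β t z) (Zel E eA eB β s w)}
      = Submodule.span ℂ {c : C₁ | ∃ x : C₁, c = eA * x * α (t * s⁻¹) eA} := by
  have lin_eq := lin_zel_zel E heA_star heB_star heB_idem hβ_mul hlam_lsmul hlam_rsmul hzs t s
  refine Submodule.span_eq_span ?_ ?_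
  · rintro _ ⟨z, w, rfl⟩
    exact Submodule.subset_span ⟨_, lin_eq z w⟩
  · rintro _ ⟨x, rfl⟩
    have hus : ∑ j, β t (ds j) * β t eB * star (β t (ds j)) = 1 := by
      simp only [← map_star, ← map_mul, ← map_sum, hds, map_one]
    rw [E.eq_sum_linner_rsmul hzs hus x, Finset.mul_sum, Finset.sum_mul]
    refine Submodule.sum_mem _ fun i _ => ?_
    rw [Finset.mul_sum, Finset.sum_mul]
    refine Submodule.sum_mem _ fun j _ =>
      Submodule.subset_span
        ⟨E.rsmul (E.lsmul x (zs i)) (β t (ds j)), lam (t * s⁻¹)⁻¹ (E.rsmul (zs i) (β t (ds j))), ?_⟩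
    rw [lin_eq, ← hlam_mul, mul_inv_cancel, hlam_one]

lemma span_rin_zel_eq (heA_star : star eA = eA) (heA_idem : eA * eA = eA)
    (heB_star : star eB = eB)
    (hβ_one : ∀ z : D₁, β 1 z = z) (hβ_mul : ∀ t s : G, ∀ z : D₁, β (t * s) z = β t (β s z))
    {kc : ℕ} {cs : Fin kc → C₁} (hcs : ∑ j, cs j * eA * star (cs j) = 1)
    {kw : ℕ} {ws : Fin kw → Z} (hws : ∑ i, E.rinner (ws i) (ws i) = 1) (t s : G) :
    Submodule.span ℂ
        {d : D₁ | ∃ z w : Z, d = Rin E β t (Zel E eA eB β t z) (Zel E eA eB β s w)}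
      = Submodule.span ℂ {d : D₁ | ∃ y : D₁, d = eB * y * β (t⁻¹ * s) eB} := by
  have rin_eq := rin_zel_zel E heA_star heA_idem heB_star hβ_one hβ_mul hws t s
  refine Submodule.span_eq_span ?_ ?_
  · rintro _ ⟨z, w, rfl⟩
    exact Submodule.subset_span ⟨_, rin_eq z w⟩
  · rintro _ ⟨y, rfl⟩
    have hy : y = β t⁻¹ (β t y) := by rw [← hβ_mul, inv_mul_cancel, hβ_one]
    rw [hy, E.eq_sum_rinner_lsmul hws hcs (β t y), map_sum, Finset.mul_sum, Finset.sum_mul]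
    refine Submodule.sum_mem _ fun i _ => ?_
    rw [map_sum, Finset.mul_sum, Finset.sum_mul]
    exact Submodule.sum_mem _ fun j _ => Submodule.subset_span ⟨_, _, (rin_eq _ _).symm⟩

end TwistedBimodule

theorem twisted_bundle_is_equivalence_bundle_general
    {G : Type} [Group G]
    {C₁ D₁ : Type} [CStarAlgebra C₁] [CStarAlgebra D₁]
    -- the Jones projections `e_A ∈ C₁`, `e_B ∈ D₁`:
    (eA : C₁) (heA_star : star eA = eA) (heA_idem : eA * eA = eA)
    (eB : D₁) (heB_star : star eB = eB) (heB_idem : eB * eB = eB)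
    -- the action `α = α^𝒜` of `G` on `C₁` and the action `β = α^ℬ ∘ f` on `D₁`:
    (α : G → C₁ ≃⋆ₐ[ℂ] C₁)
    (β : G → D₁ ≃⋆ₐ[ℂ] D₁)
    (hβ_one : ∀ z : D₁, β 1 z = z)
    (hβ_mul : ∀ t s : G, ∀ z : D₁, β (t * s) z = β t (β s z))
    -- the `C₁`-`D₁`-equivalence bimodule `Z`:
    {Z : Type} [NormedAddCommGroup Z]
    (E : HilbertBimod C₁ D₁ Z)
    -- the action `λ` of `G` on `Z` implementing the strong Morita
    -- equivalence of `α` and `β`: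
    (lam : G → Z → Z)
    (hlam_one : ∀ x : Z, lam 1 x = x)
    (hlam_mul : ∀ t s : G, ∀ x : Z, lam (t * s) x = lam t (lam s x))
    (hlam_lsmul : ∀ t : G, ∀ (c : C₁) (x : Z),
      lam t (E.lsmul c x) = E.lsmul (α t c) (lam t x))
    (hlam_rsmul : ∀ t : G, ∀ (x : Z) (d : D₁),
      lam t (E.rsmul x d) = E.rsmul (lam t x) (β t d))
    (hlam_rinner : ∀ t : G, ∀ x y : Z,
      E.rinner (lam t x) (lam t y) = β t (E.rinner x y))
    -- quasi-bases for the conditional expectations `E^A` and `E^B`: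
    {kc : ℕ} (cs : Fin kc → C₁) (hcs : ∑ j, cs j * eA * star (cs j) = 1)
    {kd : ℕ} (ds : Fin kd → D₁) (hds : ∑ j, ds j * eB * star (ds j) = 1)
    -- finite families in `Z` with `Σ_i ⟨z_i , z_i⟩_{C₁} = 1` and
    -- `Σ_i ⟨w_i , w_i⟩_{D₁} = 1`:
    {kz : ℕ} (zs : Fin kz → Z) (hzs : ∑ i, E.linner (zs i) (zs i) = 1)
    {kw : ℕ} (ws : Fin kw → Z) (hws : ∑ i, E.rinner (ws i) (ws i) = 1) :
    -- the two inner products on `W` are compatible: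
    (∀ t s r : G, ∀ z y w : Z,
      Lact E lam (t * s⁻¹)
          (Lin E lam t s (Zel E eA eB β t z) (Zel E eA eB β s y)) (Zel E eA eB β r w)
        = Ract E β t (Zel E eA eB β t z)
            (Rin E β s (Zel E eA eB β s y) (Zel E eA eB β r w))) ∧
    -- `⟨Z_t , Z_s⟩_C = e_A C₁ α_{ts⁻¹}(e_A)` …
    (∀ t s : G,
      Submodule.span ℂ
          {c : C₁ | ∃ z w : Z, c = Lin E lam t s (Zel E eA eB β t z) (Zel E eA eB β s w)}
        = Submodule.span ℂ {c : C₁ | ∃ x : C₁, c = eA * x * α (t * s⁻¹) eA}) ∧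
    -- … and `⟨Z_t , Z_s⟩_D = e_B D₁ β_{t⁻¹s}(e_B)`:
    (∀ t s : G,
      Submodule.span ℂ
          {d : D₁ | ∃ z w : Z, d = Rin E β t (Zel E eA eB β t z) (Zel E eA eB β s w)}
        = Submodule.span ℂ {d : D₁ | ∃ y : D₁, d = eB * y * β (t⁻¹ * s) eB}) := by
  refine ⟨fun t s r z y w => lact_lin_eq_ract_rin E hβ_mul hlam_rinner t s _ _ _,
    span_lin_zel_eq E heA_star heB_star heB_idem hβ_mul hlam_one hlam_mul hlam_lsmul hlam_rsmul
      hds hzs,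
    span_rin_zel_eq E heA_star heA_idem heB_star hβ_one hβ_mul hcs hws⟩

/-- Lemma 4.4 of the paper.
With `Z_t = e_A · Z · β_t(e_B)` and `W = ⊕_{t∈G} Z_t` as above, the left
`C`-valued and right `D`-valued inner products on `W` are compatible,
`⟨z , y⟩_C ◇ w = z ◇ ⟨y , w⟩_D` for homogeneous `z, y, w`, and for all
`t, s ∈ G` one has `⟨Z_t , Z_s⟩_C = Y_{α_{ts⁻¹}} = e_A C₁ α_{ts⁻¹}(e_A)` and
`⟨Z_t , Z_s⟩_D = Y_{β_{t⁻¹s}} = e_B D₁ β_{t⁻¹s}(e_B)`.  Consequently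
`{Z_t}_{t∈G}` is an `𝒜₁`-`ℬ₁^f`-equivalence bundle over `G`, where
`𝒜₁ = {e_A C₁ α_t(e_A)}_{t∈G}` and `ℬ₁^f = {e_B D₁ β_t(e_B)}_{t∈G}` are the
C*-algebraic bundles induced by the actions `α` and `β`. -/
theorem twisted_bundle_is_equivalence_bundle
    {G : Type} [Group G] [Fintype G] [DecidableEq G]
    {C₁ D₁ : Type} [CStarAlgebra C₁] [CStarAlgebra D₁]
    -- the Jones projections `e_A ∈ C₁`, `e_B ∈ D₁`:
    (eA : C₁) (heA_star : star eA = eA) (heA_idem : eA * eA = eA)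
    (eB : D₁) (heB_star : star eB = eB) (heB_idem : eB * eB = eB)
    -- the action `α = α^𝒜` of `G` on `C₁` and the action `β = α^ℬ ∘ f` on `D₁`:
    (α : G → C₁ ≃⋆ₐ[ℂ] C₁)
    (hα_one : ∀ z : C₁, α 1 z = z)
    (hα_mul : ∀ t s : G, ∀ z : C₁, α (t * s) z = α t (α s z))
    (β : G → D₁ ≃⋆ₐ[ℂ] D₁)
    (hβ_one : ∀ z : D₁, β 1 z = z)
    (hβ_mul : ∀ t s : G, ∀ z : D₁, β (t * s) z = β t (β s z))
    -- the `C₁`-`D₁`-equivalence bimodule `Z`: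
    {Z : Type} [NormedAddCommGroup Z] [CompleteSpace Z]
    (E : HilbertBimod C₁ D₁ Z) (hlF : E.LFull) (hrF : E.RFull)
    -- the action `λ` of `G` on `Z` implementing the strong Morita
    -- equivalence of `α` and `β`:
    (lam : G → Z → Z)
    (hlam_add : ∀ t : G, ∀ x y : Z, lam t (x + y) = lam t x + lam t y)
    (hlam_one : ∀ x : Z, lam 1 x = x)
    (hlam_mul : ∀ t s : G, ∀ x : Z, lam (t * s) x = lam t (lam s x))
    (hlam_lsmul : ∀ t : G, ∀ (c : C₁) (x : Z),
      lam t (E.lsmul c x) = E.lsmul (α t c) (lam t x))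
    (hlam_rsmul : ∀ t : G, ∀ (x : Z) (d : D₁),
      lam t (E.rsmul x d) = E.rsmul (lam t x) (β t d))
    (hlam_linner : ∀ t : G, ∀ x y : Z,
      E.linner (lam t x) (lam t y) = α t (E.linner x y))
    (hlam_rinner : ∀ t : G, ∀ x y : Z,
      E.rinner (lam t x) (lam t y) = β t (E.rinner x y))
    -- `Σ_{t∈G} β_t(e_B) = 1` and `Σ_{t∈G} α_t(e_A) = 1`:
    (hβ_sum : ∑ t : G, β t eB = 1)
    (hα_sum : ∑ t : G, α t eA = 1)
    -- quasi-bases for the conditional expectations `E^A` and `E^B`: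
    {kc : ℕ} (cs : Fin kc → C₁) (hcs : ∑ j, cs j * eA * star (cs j) = 1)
    {kd : ℕ} (ds : Fin kd → D₁) (hds : ∑ j, ds j * eB * star (ds j) = 1)
    -- finite families in `Z` with `Σ_i ⟨z_i , z_i⟩_{C₁} = 1` and
    -- `Σ_i ⟨w_i , w_i⟩_{D₁} = 1`:
    {kz : ℕ} (zs : Fin kz → Z) (hzs : ∑ i, E.linner (zs i) (zs i) = 1)
    {kw : ℕ} (ws : Fin kw → Z) (hws : ∑ i, E.rinner (ws i) (ws i) = 1) :
    -- the two inner products on `W` are compatible: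
    (∀ t s r : G, ∀ z y w : Z,
      Lact E lam (t * s⁻¹)
          (Lin E lam t s (Zel E eA eB β t z) (Zel E eA eB β s y)) (Zel E eA eB β r w)
        = Ract E β t (Zel E eA eB β t z)
            (Rin E β s (Zel E eA eB β s y) (Zel E eA eB β r w))) ∧
    -- `⟨Z_t , Z_s⟩_C = e_A C₁ α_{ts⁻¹}(e_A)` …
    (∀ t s : G,
      Submodule.span ℂ
          {c : C₁ | ∃ z w : Z, c = Lin E lam t s (Zel E eA eB β t z) (Zel E eA eB β s w)}
        = Submodule.span ℂ {c : C₁ | ∃ x : C₁, c = eA * x * α (t * s⁻¹) eA}) ∧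
    -- … and `⟨Z_t , Z_s⟩_D = e_B D₁ β_{t⁻¹s}(e_B)`:
    (∀ t s : G,
      Submodule.span ℂ
          {d : D₁ | ∃ z w : Z, d = Rin E β t (Zel E eA eB β t z) (Zel E eA eB β s w)}
        = Submodule.span ℂ {d : D₁ | ∃ y : D₁, d = eB * y * β (t⁻¹ * s) eB}) :=
  twisted_bundle_is_equivalence_bundle_general eA heA_star heA_idem eB heB_star heB_idem α β hβ_one
    hβ_mul E lam hlam_one hlam_mul hlam_lsmul hlam_rsmul hlam_rinner cs hcs ds hds zs hzs ws hws
end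
end

section
/- With Φ: M̃ ⊗_A X ⊗_A M → Y an involutive Hilbert B-B-bimodule isomorphism and Ψ: X ⊗_A M → M ⊗_B Y the induced Hilbert A-B-bimodule isomorphism Ψ(x ⊗ m) = Σ_i u_i ⊗ Φ(ũ_i ⊗ x ⊗ m): the map Θ: M ⊗_B Y → X ⊗_A M defined by Θ(m ⊗ y) = m ⊗ Φ⁻¹(y) (under the identification M ⊗_B M̃ ⊗_A X ⊗_A M ≅ X ⊗_A M via m ⊗ ñ ⊗ x ⊗ m₁ ↦ ⟨m, n⟩_A · x ⊗ m₁) is a Hilbert A-B-bimodule isomorphism satisfying Θ ∘ Ψ = id on X ⊗_A M and Ψ ∘ Θ = id on M ⊗_B Y; in particular Θ preserves both the left A-valued and right B-valued inner products. -/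
noncomputable section

open scoped BigOperators

/-- The data exhibiting the Hilbert `B`-`A`-bimodule `X'` as the dual
(conjugate) bimodule `X̃` of the Hilbert `A`-`B`-bimodule `X`, via the
conjugation map `x ↦ x̃`. -/
structure DualData {A B X X' : Type*}
    [NormedRing A] [StarRing A] [NormedRing B] [StarRing B]
    [NormedAddCommGroup X] [NormedAddCommGroup X']
    (E : HilbertBimod A B X) (F : HilbertBimod B A X') where
  conj : X → X'
  conj_add : ∀ x y, conj (x + y) = conj x + conj y
  conj_bijective : Function.Bijective conj
  lsmul_conj : ∀ (b : B) (x : X), F.lsmul b (conj x) = conj (E.rsmul x (star b))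
  rsmul_conj : ∀ (x : X) (a : A), F.rsmul (conj x) a = conj (E.lsmul (star a) x)
  linner_conj : ∀ x y : X, F.linner (conj x) (conj y) = E.rinner x y
  rinner_conj : ∀ x y : X, F.rinner (conj x) (conj y) = E.linner x y
  norm_conj : ∀ x : X, ‖conj x‖ = ‖x‖

/-- The data exhibiting the Hilbert `A`-`C`-bimodule `T` as the interior
tensor product `X ⊗_B Y` of the Hilbert `A`-`B`-bimodule `X` and the Hilbert
`B`-`C`-bimodule `Y`. -/
structure TensorData {A B C X Y T : Type*}
    [NormedRing A] [StarRing A] [NormedRing B] [StarRing B]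
    [NormedRing C] [StarRing C]
    [NormedAddCommGroup X] [NormedAddCommGroup Y] [NormedAddCommGroup T]
    (E : HilbertBimod A B X) (F : HilbertBimod B C Y)
    (G : HilbertBimod A C T) where
  tmul : X → Y → T
  tmul_add_left : ∀ x x' y, tmul (x + x') y = tmul x y + tmul x' y
  tmul_add_right : ∀ x y y', tmul x (y + y') = tmul x y + tmul x y'
  tmul_balanced : ∀ (x : X) (b : B) (y : Y),
    tmul (E.rsmul x b) y = tmul x (F.lsmul b y)
  lsmul_tmul : ∀ (a : A) (x : X) (y : Y),
    G.lsmul a (tmul x y) = tmul (E.lsmul a x) y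
  rsmul_tmul : ∀ (x : X) (y : Y) (c : C),
    G.rsmul (tmul x y) c = tmul x (F.rsmul y c)
  linner_tmul : ∀ (x x' : X) (y y' : Y),
    G.linner (tmul x y) (tmul x' y') = E.linner (E.rsmul x (F.linner y y')) x'
  rinner_tmul : ∀ (x x' : X) (y y' : Y),
    G.rinner (tmul x y) (tmul x' y') = F.rinner y (F.lsmul (E.rinner x x') y')
  tmul_dense : Dense
    ((AddSubgroup.closure {t : T | ∃ x y, t = tmul x y} : AddSubgroup T) : Set T)

/-- An involution on a Hilbert `A`-`A`-bimodule, making it an involutive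
Hilbert bimodule:  a conjugate-linear map `x ↦ x^♮` with `(x^♮)^♮ = x`,
`(a·x·b)^♮ = b*·x^♮·a*` and `⟨x , y^♮⟩_A = ⟨x^♮ , y⟩_A` (the left inner
product of `x` with `y^♮` equals the right inner product of `x^♮` with `y`). -/
structure Involution {A X : Type*} [NormedRing A] [StarRing A]
    [NormedAddCommGroup X] (E : HilbertBimod A A X) where
  invol : X → X
  invol_add : ∀ x y, invol (x + y) = invol x + invol y
  invol_invol : ∀ x, invol (invol x) = x
  invol_lsmul : ∀ (a : A) (x : X), invol (E.lsmul a x) = E.rsmul (invol x) (star a)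
  invol_rsmul : ∀ (x : X) (a : A), invol (E.rsmul x a) = E.lsmul (star a) (invol x)
  linner_invol : ∀ x y : X, E.linner x (invol y) = E.rinner (invol x) y

/-- `φ : X → X'` is an isomorphism of Hilbert `A`-`B`-bimodules from `E`
onto `F`. -/
structure IsBimodIso {A B X X' : Type*}
    [NormedRing A] [StarRing A] [NormedRing B] [StarRing B]
    [NormedAddCommGroup X] [NormedAddCommGroup X']
    (E : HilbertBimod A B X) (F : HilbertBimod A B X') (φ : X → X') : Prop where
  map_add : ∀ x y, φ (x + y) = φ x + φ y
  bijective : Function.Bijective φ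
  map_lsmul : ∀ (a : A) (x : X), φ (E.lsmul a x) = F.lsmul a (φ x)
  map_rsmul : ∀ (x : X) (b : B), φ (E.rsmul x b) = F.rsmul (φ x) b
  map_linner : ∀ x y : X, F.linner (φ x) (φ y) = E.linner x y
  map_rinner : ∀ x y : X, F.rinner (φ x) (φ y) = E.rinner x y

/-- Lemma 5.9 of the paper.
With `Φ : M̃ ⊗_A X ⊗_A M → Y` an involutive Hilbert `B`-`B`-bimodule
isomorphism and `Ψ : X ⊗_A M → M ⊗_B Y` the induced Hilbert
`A`-`B`-bimodule isomorphism `Ψ(x ⊗ m) = Σ_i u_i ⊗ Φ(ũ_i ⊗ x ⊗ m)`, the map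
`Θ : M ⊗_B Y → X ⊗_A M`, `Θ(m ⊗ y) = m ⊗ Φ⁻¹(y)` (under the identification
`M ⊗_B M̃ ⊗_A X ⊗_A M ≅ X ⊗_A M`, `m ⊗ ñ ⊗ x ⊗ m₁ ↦ ⟨m , n⟩_A · x ⊗ m₁`),
is a Hilbert `A`-`B`-bimodule isomorphism with `Θ ∘ Ψ = id` and
`Ψ ∘ Θ = id`; in particular `Θ` preserves both inner products. -/
theorem theta_inverse_of_psi
    {A B M M' T₁ T X Y XM MY : Type} [CStarAlgebra A] [CStarAlgebra B]
    [NormedAddCommGroup M] [NormedAddCommGroup M'] [NormedAddCommGroup T₁]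
    [NormedAddCommGroup T] [NormedAddCommGroup X] [NormedAddCommGroup Y]
    [NormedAddCommGroup XM] [NormedAddCommGroup MY]
    -- the `A`-`B`-equivalence bimodule `M`:
    (EM : HilbertBimod A B M) (hMl : EM.LFull) (hMr : EM.RFull)
    -- the involutive Hilbert `A`-`A`-bimodule `X`:
    (EX : HilbertBimod A A X) (JX : Involution EX)
    -- the involutive Hilbert `B`-`B`-bimodule `Y`:
    (EY : HilbertBimod B B Y) (JY : Involution EY)
    -- `M' = M̃`:
    (EM' : HilbertBimod B A M') (DD : DualData EM EM')
    -- `T₁ = M̃ ⊗_A X`: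
    (G₁ : HilbertBimod B A T₁) (TD₁ : TensorData EM' EX G₁)
    -- `T = M̃ ⊗_A X ⊗_A M`, with its canonical involution `J_T`:
    (GT : HilbertBimod B B T) (TD : TensorData G₁ EM GT)
    (JT : Involution GT)
    (hJT : ∀ (m n : M) (x : X),
      JT.invol (TD.tmul (TD₁.tmul (DD.conj m) x) n)
        = TD.tmul (TD₁.tmul (DD.conj n) (JX.invol x)) m)
    -- the involutive Hilbert `B`-`B`-bimodule isomorphism
    -- `Φ : M̃ ⊗_A X ⊗_A M → Y`:
    (Φ : T → Y) (hΦ : IsBimodIso GT EY Φ)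
    (hΦJ : ∀ ξ : T, Φ (JT.invol ξ) = JY.invol (Φ ξ))
    -- `XM = X ⊗_A M` and `MY = M ⊗_B Y`:
    (GXM : HilbertBimod A B XM) (TDXM : TensorData EX EM GXM)
    (GMY : HilbertBimod A B MY) (TDMY : TensorData EM EY GMY)
    -- a finite subset `{u_i}` of `M` with `Σ_i ⟨u_i , u_i⟩_A = 1`:
    {k : ℕ} (u : Fin k → M) (hu : ∑ i, EM.linner (u i) (u i) = 1)
    -- the isomorphism `Ψ`:
    (Ψ : XM → MY) (hΨiso : IsBimodIso GXM GMY Ψ)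
    (hΨ : ∀ (x : X) (m : M),
      Ψ (TDXM.tmul x m)
        = ∑ i, TDMY.tmul (u i) (Φ (TD.tmul (TD₁.tmul (DD.conj (u i)) x) m))) :
    ∃ Θ : MY → XM,
      -- `Θ(m ⊗ Φ(ñ ⊗ x ⊗ m₁)) = ⟨m , n⟩_A · x ⊗ m₁`:
      (∀ (m n : M) (x : X) (m₁ : M),
        Θ (TDMY.tmul m (Φ (TD.tmul (TD₁.tmul (DD.conj n) x) m₁)))
          = TDXM.tmul (EX.lsmul (EM.linner m n) x) m₁) ∧
      IsBimodIso GMY GXM Θ ∧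
      (∀ ξ : XM, Θ (Ψ ξ) = ξ) ∧ (∀ η : MY, Ψ (Θ η) = η) := by
  classical
  obtain ⟨Θ, hΘΨ, hΨΘ⟩ :
      ∃ Θ : MY → XM, (∀ ξ, Θ (Ψ ξ) = ξ) ∧ (∀ η, Ψ (Θ η) = η) := by
    obtain ⟨hinj, hsurj⟩ := hΨiso.bijective
    refine ⟨Function.invFun Ψ, fun ξ => Function.leftInverse_invFun hinj ξ,
      fun η => Function.rightInverse_invFun hsurj η⟩
  have hinj := hΨiso.bijective.1
  -- the key computation
  have key : ∀ (m n : M) (x : X) (m₁ : M),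
      Ψ (TDXM.tmul (EX.lsmul (EM.linner m n) x) m₁)
        = TDMY.tmul m (Φ (TD.tmul (TD₁.tmul (DD.conj n) x) m₁)) := by
    intro m n x m₁
    -- additive map `a ↦ m ⊗ Φ(ñ ⊗ (a·x) ⊗ m₁)`
    set F : A →+ MY := AddMonoidHom.mk'
      (fun a => TDMY.tmul m (Φ (TD.tmul (TD₁.tmul (DD.conj n) (EX.lsmul a x)) m₁)))
      (by
        intro a b
        rw [EX.add_lsmul, TD₁.tmul_add_right, TD.tmul_add_left, hΦ.map_add,
          TDMY.tmul_add_right]) with hF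
    have hRHS : TDMY.tmul m (Φ (TD.tmul (TD₁.tmul (DD.conj n) x) m₁))
        = ∑ i, F (EM.linner (u i) (u i)) := by
      rw [← map_sum, hu]
      simp only [hF, AddMonoidHom.mk'_apply, EX.one_lsmul]
    rw [hRHS, ← TDXM.lsmul_tmul, hΨiso.map_lsmul, hΨ]
    -- push `lsmul` through the sum
    have hsum : GMY.lsmul (EM.linner m n)
        (∑ i, TDMY.tmul (u i) (Φ (TD.tmul (TD₁.tmul (DD.conj (u i)) x) m₁)))
        = ∑ i, GMY.lsmul (EM.linner m n)
            (TDMY.tmul (u i) (Φ (TD.tmul (TD₁.tmul (DD.conj (u i)) x) m₁))) :=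
      map_sum (AddMonoidHom.mk' (GMY.lsmul (EM.linner m n))
        (GMY.lsmul_add (EM.linner m n))) _ _
    rw [hsum]
    refine Finset.sum_congr rfl fun i _ => ?_
    rw [TDMY.lsmul_tmul, EM.inner_assoc, TDMY.tmul_balanced, ← hΦ.map_lsmul,
      TD.lsmul_tmul, TD₁.lsmul_tmul, DD.lsmul_conj, EM.rinner_star,
      ← EM.inner_assoc]
    have hconj : DD.conj (EM.lsmul (EM.linner (u i) (u i)) n)
        = EM'.rsmul (DD.conj n) (EM.linner (u i) (u i)) := by
      rw [DD.rsmul_conj, EM.linner_star]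
    rw [hconj, TD₁.tmul_balanced, hF, AddMonoidHom.mk'_apply]
  refine ⟨Θ, ?_, ?_, hΘΨ, hΨΘ⟩
  · intro m n x m₁
    rw [← key, hΘΨ]
  · constructor
    · intro x y
      apply hinj
      rw [hΨΘ, hΨiso.map_add, hΨΘ, hΨΘ]
    · constructor
      · intro a b hab
        have := congrArg Ψ hab
        rwa [hΨΘ, hΨΘ] at this
      · intro ξ
        exact ⟨Ψ ξ, hΘΨ ξ⟩
    · intro a x
      apply hinj
      rw [hΨΘ, hΨiso.map_lsmul, hΨΘ]
    · intro x b
      apply hinj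
      rw [hΨΘ, hΨiso.map_rsmul, hΨΘ]
    · intro x y
      rw [← hΨiso.map_linner, hΨΘ, hΨΘ]
    · intro x y
      rw [← hΨiso.map_rinner, hΨΘ, hΨΘ]
end
end
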